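/- arXiv:2105.11779 — 6 statements merged into one kernel-verified Lean document; each statement's English description precedes it below -/
import Mathlib

section
/- Every irrational p-adic number ξ satisfies 2 ≤ μ(ξ) ≤ μ×(ξ) ≤ 2·μ(ξ) (as extended real numbers, with the convention 2·∞ = ∞). -/
/-!
`2 ≤ μ(ξ)` is a `p`-adic Dirichlet theorem. After scaling `ξ` into `ℤ_[p]`, pigeonholing the
`(p^j + 1)^2` pairs `0 ≤ x, y ≤ p^j` into the `p^(2j)` residues of `yξ - x` modulo `p^(2j)` gives
`|x|, |y| ≤ p^j` with `|yξ - x|_p ≤ p^(-2j)`; for large `j` both `x` and `y` are nonzero, and by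
irrationality `yξ - x ≠ 0`, so these solutions become infinitely many as `j → ∞`.
The other two inequalities compare heights: for nonzero integers `√|xy| ≤ max(|x|,|y|) ≤ |xy|`,
so a solution for `μ` with exponent `m` is one for `μ×` with exponent `m`, and a solution for `μ×`
with exponent `m` is one for `μ` with exponent `m / 2`.
-/

open Filter MeasureTheory
open scoped ENNReal

/-- A `p`-adic number is irrational if it is not the image of a rational number. -/
def PadicIrrational (p : ℕ) [Fact p.Prime] (ξ : ℚ_[p]) : Prop :=
  ∀ q : ℚ, (q : ℚ_[p]) ≠ ξ

/-- The irrationality exponent `μ(ξ)` of a `p`-adic number `ξ`: the supremum (in `[0,∞]`)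
of the real numbers `m` such that `0 < |yξ - x|_p ≤ max(|x|,|y|)^(-m)` has infinitely many
solutions in nonzero integers `x, y`. -/
noncomputable def muExp (p : ℕ) [Fact p.Prime] (ξ : ℚ_[p]) : ℝ≥0∞ :=
  sSup (ENNReal.ofReal '' {m : ℝ |
    {q : ℤ × ℤ | q.1 ≠ 0 ∧ q.2 ≠ 0 ∧
      0 < ‖(q.2 : ℚ_[p]) * ξ - (q.1 : ℚ_[p])‖ ∧
      ‖(q.2 : ℚ_[p]) * ξ - (q.1 : ℚ_[p])‖ ≤ (max |(q.1 : ℝ)| |(q.2 : ℝ)|) ^ (-m)}.Infinite})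

/-- The multiplicative irrationality exponent `μ×(ξ)`: the supremum of the real numbers `m`
such that `0 < |yξ - x|_p ≤ (|xy|^(1/2))^(-m)` has infinitely many solutions in nonzero
integers `x, y`. -/
noncomputable def muTimesExp (p : ℕ) [Fact p.Prime] (ξ : ℚ_[p]) : ℝ≥0∞ :=
  sSup (ENNReal.ofReal '' {m : ℝ |
    {q : ℤ × ℤ | q.1 ≠ 0 ∧ q.2 ≠ 0 ∧
      0 < ‖(q.2 : ℚ_[p]) * ξ - (q.1 : ℚ_[p])‖ ∧
      ‖(q.2 : ℚ_[p]) * ξ - (q.1 : ℚ_[p])‖ ≤ (Real.sqrt |(q.1 : ℝ) * (q.2 : ℝ)|) ^ (-m)}.Infinite})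

/-- The uniform irrationality exponent `μ̂(ξ)`: the supremum of the real numbers `m` such that
for every sufficiently large real `X` the system
`0 < max(|x|,|y|) ≤ X`, `|yξ - x|_p ≤ X^(-m)` has an integer solution. -/
noncomputable def muHatExp (p : ℕ) [Fact p.Prime] (ξ : ℚ_[p]) : ℝ≥0∞ :=
  sSup (ENNReal.ofReal '' {m : ℝ | ∀ᶠ X : ℝ in atTop, ∃ x y : ℤ,
    0 < max |(x : ℝ)| |(y : ℝ)| ∧ max |(x : ℝ)| |(y : ℝ)| ≤ X ∧
    ‖(y : ℚ_[p]) * ξ - (x : ℚ_[p])‖ ≤ X ^ (-m)})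

/-- The uniform multiplicative irrationality exponent `μ̂×(ξ)`: the supremum of the real
numbers `m` such that for every sufficiently large real `X` the system
`0 < |xy|^(1/2) ≤ X`, `|yξ - x|_p ≤ X^(-m)` has an integer solution. -/
noncomputable def muHatTimesExp (p : ℕ) [Fact p.Prime] (ξ : ℚ_[p]) : ℝ≥0∞ :=
  sSup (ENNReal.ofReal '' {m : ℝ | ∀ᶠ X : ℝ in atTop, ∃ x y : ℤ,
    0 < Real.sqrt |(x : ℝ) * (y : ℝ)| ∧ Real.sqrt |(x : ℝ) * (y : ℝ)| ≤ X ∧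
    ‖(y : ℚ_[p]) * ξ - (x : ℚ_[p])‖ ≤ X ^ (-m)})

namespace PadicInt

variable {p : ℕ} [hp : Fact p.Prime]

theorem exists_int_norm_mul_sub_le (ζ : ℤ_[p]) (j : ℕ) :
    ∃ x y : ℤ, (x, y) ≠ 0 ∧ |x| ≤ p ^ j ∧ |y| ≤ p ^ j ∧
      ‖(y : ℤ_[p]) * ζ - x‖ ≤ (p : ℝ) ^ (-(2 * j : ℕ) : ℤ) := by
  have : NeZero (p ^ (2 * j)) := ⟨pow_ne_zero _ hp.out.ne_zero⟩
  let f : ℕ × ℕ → ZMod (p ^ (2 * j)) := fun a => toZModPow (2 * j) (a.2 * ζ - a.1)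
  let s := Finset.range (p ^ j + 1) ×ˢ Finset.range (p ^ j + 1)
  have hcard : (Finset.univ : Finset (ZMod (p ^ (2 * j)))).card < s.card := by
    simp only [Finset.card_univ, ZMod.card, s, Finset.card_product, Finset.card_range, pow_mul',
      sq]
    exact Nat.mul_self_lt_mul_self (Nat.lt_succ_self _)
  obtain ⟨a, ha, b, hb, hab, hfab⟩ := Finset.exists_ne_map_eq_of_card_lt_of_maps_to hcard
    (fun _ _ => Finset.mem_coe.2 (Finset.mem_univ (f _)))
  simp only [s, Finset.mem_product, Finset.mem_range] at ha hb
  zify at ha hb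
  refine ⟨a.1 - b.1, a.2 - b.2, ?_, ?_, ?_, ?_⟩
  · intro h
    simp only [Prod.mk_eq_zero, sub_eq_zero, Nat.cast_inj] at h
    exact hab (Prod.ext h.1 h.2)
  · rw [abs_le]; omega
  · rw [abs_le]; omega
  · rw [norm_le_pow_iff_mem_span_pow, ← ker_toZModPow, RingHom.mem_ker]
    have : ((a.2 - b.2 : ℤ) : ℤ_[p]) * ζ - (a.1 - b.1 : ℤ) =
        (a.2 * ζ - a.1) - (b.2 * ζ - b.1) := by
      push_cast; ring
    rw [this, map_sub]
    exact sub_eq_zero.2 hfab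

theorem int_eq_zero_of_norm_le {x : ℤ} {k : ℕ} (hx : |x| < p ^ k)
    (h : ‖(x : ℤ_[p])‖ ≤ (p : ℝ) ^ (-k : ℤ)) : x = 0 :=
  Int.eq_zero_of_abs_lt_dvd (norm_int_le_pow_iff_dvd.1 h) hx

theorem exists_int_ne_zero_norm_mul_sub_le {ζ : ℤ_[p]} (hζ : ζ ≠ 0) {j : ℕ}
    (hj : ζ.valuation < j) :
    ∃ x y : ℤ, x ≠ 0 ∧ y ≠ 0 ∧ |x| ≤ p ^ j ∧ |y| ≤ p ^ j ∧
      ‖(y : ℤ_[p]) * ζ - x‖ ≤ (p : ℝ) ^ (-(2 * j : ℕ) : ℤ) := by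
  obtain ⟨x, y, hxy, hx, hy, hnorm⟩ := exists_int_norm_mul_sub_le ζ j
  -- `y = 0` forces `p^(2j) ∣ x`, and `x = 0` forces `v(y) ≥ 2j - v(ζ) > j`.
  have hlt {k : ℕ} (hk : j < k) : (p : ℤ) ^ j < p ^ k :=
    pow_lt_pow_right₀ (by exact_mod_cast hp.out.one_lt) hk
  have hy0 : y ≠ 0 := by
    rintro rfl
    refine hxy (Prod.ext (int_eq_zero_of_norm_le (hx.trans_lt (hlt (k := 2 * j) ?_)) ?_) rfl)
    · omega
    · simpa using hnorm
  have hx0 : x ≠ 0 := by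
    rintro rfl
    have hy' : (y : ℤ_[p]) ≠ 0 := Int.cast_ne_zero.2 hy0
    rw [Int.cast_zero, sub_zero, norm_le_pow_iff_le_valuation _ (mul_ne_zero hy' hζ),
      valuation_mul hy' hζ] at hnorm
    refine hy0 (int_eq_zero_of_norm_le (k := j + 1) (hy.trans_lt (hlt (by omega))) ?_)
    rw [norm_le_pow_iff_le_valuation _ hy']
    omega
  exact ⟨x, y, hx0, hy0, hx, hy, hnorm⟩

end PadicInt

theorem Padic.exists_norm_pow_mul_le_one {p : ℕ} [hp : Fact p.Prime] (ξ : ℚ_[p]) :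
    ∃ v : ℕ, ‖(p : ℚ_[p]) ^ v * ξ‖ ≤ 1 := by
  obtain ⟨v, hv⟩ := pow_unbounded_of_one_lt ‖ξ‖ (by exact_mod_cast hp.out.one_lt : (1 : ℝ) < p)
  refine ⟨v, ?_⟩
  rw [norm_mul, norm_pow, Padic.norm_p, inv_pow]
  exact inv_mul_le_one_of_le₀ hv.le (by positivity)

theorem Padic.exists_eventually_exists_int_norm_mul_sub_le {p : ℕ} [hp : Fact p.Prime]
    {ξ : ℚ_[p]} (hξ : ξ ≠ 0) :
    ∃ v : ℕ, ∀ᶠ j : ℕ in atTop, ∃ x y : ℤ, x ≠ 0 ∧ y ≠ 0 ∧ max |x| |y| ≤ p ^ (v + j) ∧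
      ‖(y : ℚ_[p]) * ξ - x‖ ≤ (p : ℝ) ^ (-(2 * j : ℕ) : ℤ) := by
  have hpv {v : ℕ} : (p : ℤ) ^ v ≠ 0 := pow_ne_zero _ (by exact_mod_cast hp.out.ne_zero)
  obtain ⟨v, hv⟩ := exists_norm_pow_mul_le_one ξ
  let ζ : ℤ_[p] := ⟨p ^ v * ξ, hv⟩
  have hζ : ζ ≠ 0 := by
    rw [Ne, ← PadicInt.coe_eq_zero]
    exact mul_ne_zero (by exact_mod_cast hpv) hξ
  refine ⟨v, (eventually_gt_atTop ζ.valuation).mono fun j hj => ?_⟩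
  obtain ⟨x, y, hx0, hy0, hx, hy, hnorm⟩ := PadicInt.exists_int_ne_zero_norm_mul_sub_le hζ hj
  refine ⟨x, p ^ v * y, hx0, mul_ne_zero hpv hy0, max_le ?_ ?_, ?_⟩
  · exact hx.trans (pow_le_pow_right₀ (by exact_mod_cast hp.out.one_lt.le) (by omega))
  · rw [abs_mul, abs_pow, Nat.abs_cast, pow_add]
    exact mul_le_mul_of_nonneg_left hy (by positivity)
  · have : ‖(y : ℤ_[p]) * ζ - x‖ = ‖(y : ℚ_[p]) * (p ^ v * ξ) - x‖ := by
      rw [PadicInt.norm_def]; push_cast; rfl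
    rw [this] at hnorm
    convert hnorm using 2
    push_cast
    ring

theorem Real.zpow_neg_le_rpow_neg {b M m : ℝ} {n k : ℕ} (hb : 1 ≤ b) (hM0 : 0 < M)
    (hM : M ≤ b ^ n) (hm : 0 ≤ m) (hmk : m * n ≤ k) : b ^ (-k : ℤ) ≤ M ^ (-m) :=
  calc b ^ (-k : ℤ) = b ^ (-(k : ℝ)) := by rw [← Real.rpow_intCast]; push_cast; rfl
    _ ≤ b ^ (-(m * n)) := Real.rpow_le_rpow_of_exponent_le hb (by linarith)
    _ = (b ^ n) ^ (-m) := by rw [← Real.rpow_natCast, ← Real.rpow_mul (by positivity)]; ring_nf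
    _ ≤ M ^ (-m) := Real.rpow_le_rpow_of_nonpos hM0 hM (neg_nonpos.2 hm)

theorem Set.infinite_of_forall_exists_pos_lt {α : Type*} {S : Set α} (F : α → ℝ)
    (hpos : ∀ q ∈ S, 0 < F q) (h : ∀ ε > 0, ∃ q ∈ S, F q < ε) : S.Infinite := by
  intro hfin
  obtain ⟨q₀, hq₀, -⟩ := h 1 one_pos
  obtain ⟨q, hq, hmin⟩ := S.exists_min_image F hfin ⟨q₀, hq₀⟩
  obtain ⟨q', hq', hlt⟩ := h (F q) (hpos q hq)
  exact (hmin q' hq').not_gt hlt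

namespace PadicIrrational

variable {p : ℕ} [Fact p.Prime] {ξ : ℚ_[p]}

theorem ne_zero (hξ : PadicIrrational p ξ) : ξ ≠ 0 := fun h => hξ 0 (by simp [h])

theorem mul_sub_ne_zero (hξ : PadicIrrational p ξ) (x : ℤ) {y : ℤ} (hy : y ≠ 0) :
    (y : ℚ_[p]) * ξ - x ≠ 0 := by
  intro h
  apply hξ (x / y)
  push_cast
  rw [div_eq_iff (Int.cast_ne_zero.2 hy)]
  linear_combination -h

end PadicIrrational

/-- The solution sets in `muExp` (height `H q = max |x| |y|`) and in `muTimesExp`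
(height `H q = √|x y|`). -/
def approxSolutions (p : ℕ) [Fact p.Prime] (ξ : ℚ_[p]) (H : ℤ × ℤ → ℝ) (m : ℝ) :
    Set (ℤ × ℤ) :=
  {q | q.1 ≠ 0 ∧ q.2 ≠ 0 ∧ 0 < ‖(q.2 : ℚ_[p]) * ξ - (q.1 : ℚ_[p])‖ ∧
    ‖(q.2 : ℚ_[p]) * ξ - (q.1 : ℚ_[p])‖ ≤ H q ^ (-m)}

theorem muExp_eq (p : ℕ) [Fact p.Prime] (ξ : ℚ_[p]) :
    muExp p ξ = sSup (ENNReal.ofReal '' {m : ℝ |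
      (approxSolutions p ξ (fun q => max |(q.1 : ℝ)| |(q.2 : ℝ)|) m).Infinite}) :=
  rfl

theorem muTimesExp_eq (p : ℕ) [Fact p.Prime] (ξ : ℚ_[p]) :
    muTimesExp p ξ = sSup (ENNReal.ofReal '' {m : ℝ |
      (approxSolutions p ξ (fun q => Real.sqrt |(q.1 : ℝ) * (q.2 : ℝ)|) m).Infinite}) :=
  rfl

section approxSolutions

variable {p : ℕ} [hp : Fact p.Prime] {ξ : ℚ_[p]}

theorem approxSolutions_subset {H H' : ℤ × ℤ → ℝ} {m m' : ℝ}
    (h : ∀ q : ℤ × ℤ, q.1 ≠ 0 → q.2 ≠ 0 → H q ^ (-m) ≤ H' q ^ (-m')) :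
    approxSolutions p ξ H m ⊆ approxSolutions p ξ H' m' :=
  fun q ⟨hx, hy, hpos, hle⟩ => ⟨hx, hy, hpos, hle.trans (h q hx hy)⟩

theorem exists_mem_approxSolutions_max_norm_lt (hξ : PadicIrrational p ξ) {m : ℝ}
    (hm0 : 0 ≤ m) (hm2 : m < 2) {ε : ℝ} (hε : 0 < ε) :
    ∃ q ∈ approxSolutions p ξ (fun q => max |(q.1 : ℝ)| |(q.2 : ℝ)|) m,
      ‖(q.2 : ℚ_[p]) * ξ - q.1‖ < ε := by
  have hp1 : (1 : ℝ) < p := by exact_mod_cast hp.out.one_lt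
  obtain ⟨v, happrox⟩ := Padic.exists_eventually_exists_int_norm_mul_sub_le hξ.ne_zero
  have hjm : ∀ᶠ j : ℕ in atTop, m * (v + j) ≤ 2 * j := by
    have := (tendsto_natCast_atTop_atTop (R := ℝ)).const_mul_atTop (sub_pos.2 hm2)
    filter_upwards [this.eventually_ge_atTop (m * v)] with j hj
    linarith
  have hjε : ∀ᶠ j : ℕ in atTop, (p : ℝ) ^ (-(2 * j : ℕ) : ℤ) < ε := by
    obtain ⟨n, hn⟩ := exists_pow_lt_of_lt_one hε (inv_lt_one_of_one_lt₀ hp1)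
    filter_upwards [eventually_ge_atTop n] with j hj
    rw [zpow_neg, zpow_natCast, ← inv_pow]
    exact (pow_le_pow_of_le_one (by positivity) (inv_le_one_of_one_le₀ hp1.le)
      (by omega)).trans_lt hn
  obtain ⟨j, ⟨x, y, hx0, hy0, hxy, hle⟩, hjm, hjε⟩ := (happrox.and (hjm.and hjε)).exists
  refine ⟨(x, y), ⟨hx0, hy0, norm_pos_iff.2 (hξ.mul_sub_ne_zero x hy0), hle.trans ?_⟩,
    hle.trans_lt hjε⟩
  refine Real.zpow_neg_le_rpow_neg (n := v + j) hp1.le (lt_max_of_lt_left ?_) ?_ hm0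
    (by push_cast; linarith)
  · exact_mod_cast abs_pos.2 hx0
  · dsimp only
    exact_mod_cast hxy

theorem infinite_approxSolutions_max (hξ : PadicIrrational p ξ) {m : ℝ} (hm0 : 0 ≤ m)
    (hm2 : m < 2) : (approxSolutions p ξ (fun q => max |(q.1 : ℝ)| |(q.2 : ℝ)|) m).Infinite :=
  Set.infinite_of_forall_exists_pos_lt (fun q : ℤ × ℤ => ‖(q.2 : ℚ_[p]) * ξ - q.1‖)
    (fun _ hq => hq.2.2.1) (fun _ hε => exists_mem_approxSolutions_max_norm_lt hξ hm0 hm2 hε)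

end approxSolutions

theorem ENNReal.ofReal_le_sSup_ofReal_image {S : Set ℝ} {a : ℝ}
    (h : ∀ m, 0 ≤ m → m < a → m ∈ S) : ENNReal.ofReal a ≤ sSup (ENNReal.ofReal '' S) := by
  refine le_of_forall_lt_imp_le_of_dense fun c hc => ?_
  have hc' : c.toReal < a := by
    rwa [← ENNReal.ofReal_lt_ofReal_iff_of_nonneg ENNReal.toReal_nonneg,
      ENNReal.ofReal_toReal hc.ne_top]
  rw [← ENNReal.ofReal_toReal hc.ne_top]
  exact le_sSup ⟨_, h _ ENNReal.toReal_nonneg hc', rfl⟩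

theorem ENNReal.sSup_ofReal_image_le_mul {S T : Set ℝ} {a : ℝ} (ha : 0 < a)
    (h : ∀ m ∈ S, 0 < m → m / a ∈ T) :
    sSup (ENNReal.ofReal '' S) ≤ ENNReal.ofReal a * sSup (ENNReal.ofReal '' T) := by
  refine sSup_le ?_
  rintro _ ⟨m, hm, rfl⟩
  rcases le_or_gt m 0 with hm0 | hm0
  · simp [ENNReal.ofReal_of_nonpos hm0]
  · calc ENNReal.ofReal m = ENNReal.ofReal a * ENNReal.ofReal (m / a) := by
          rw [← ENNReal.ofReal_mul ha.le, mul_div_cancel₀ _ ha.ne']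
      _ ≤ ENNReal.ofReal a * sSup (ENNReal.ofReal '' T) := by
          gcongr
          exact le_sSup ⟨_, h m hm hm0, rfl⟩

theorem Real.sqrt_abs_mul_le_max_abs (x y : ℝ) : √|x * y| ≤ max |x| |y| := by
  rw [Real.sqrt_le_iff, abs_mul, sq]
  exact ⟨le_max_of_le_left (abs_nonneg x),
    mul_le_mul (le_max_left _ _) (le_max_right _ _) (abs_nonneg y)
      (le_max_of_le_left (abs_nonneg x))⟩

theorem max_abs_le_abs_mul {x y : ℝ} (hx : 1 ≤ |x|) (hy : 1 ≤ |y|) : max |x| |y| ≤ |x * y| := by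
  rw [abs_mul]
  exact max_le (le_mul_of_one_le_right (abs_nonneg x) hy) (le_mul_of_one_le_left (abs_nonneg y) hx)

/-- Every irrational `p`-adic number `ξ` satisfies `2 ≤ μ(ξ) ≤ μ×(ξ) ≤ 2·μ(ξ)`
(as extended reals, with `2·∞ = ∞`). -/
theorem statement0 (p : ℕ) [Fact p.Prime] (ξ : ℚ_[p]) (hξ : PadicIrrational p ξ) :
    2 ≤ muExp p ξ ∧ muExp p ξ ≤ muTimesExp p ξ ∧ muTimesExp p ξ ≤ 2 * muExp p ξ := by
  have one_le_abs {z : ℤ} (hz : z ≠ 0) : (1 : ℝ) ≤ |(z : ℝ)| := by exact_mod_cast Int.one_le_abs hz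
  rw [muExp_eq, muTimesExp_eq]
  refine ⟨?_, ?_, ?_⟩
  · refine (ENNReal.ofReal_ofNat 2).symm.trans_le
      (ENNReal.ofReal_le_sSup_ofReal_image fun m hm0 hm2 => infinite_approxSolutions_max hξ hm0 hm2)
  · refine (ENNReal.sSup_ofReal_image_le_mul one_pos fun m hm hm0 => ?_).trans_eq
      (by rw [ENNReal.ofReal_one, one_mul])
    refine hm.mono (approxSolutions_subset fun q hx hy => ?_)
    rw [div_one]
    exact Real.rpow_le_rpow_of_nonpos
      (Real.sqrt_pos.2 (abs_pos.2 (mul_ne_zero (by exact_mod_cast hx) (by exact_mod_cast hy))))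
      (Real.sqrt_abs_mul_le_max_abs _ _) (neg_nonpos.2 hm0.le)
  · refine (ENNReal.sSup_ofReal_image_le_mul two_pos fun m hm hm0 => ?_).trans_eq
      (by rw [ENNReal.ofReal_ofNat])
    refine hm.mono (approxSolutions_subset fun q hx hy => ?_)
    rw [Real.sqrt_eq_rpow, ← Real.rpow_mul (abs_nonneg _), one_div_mul_eq_div, neg_div]
    exact Real.rpow_le_rpow_of_nonpos ((zero_lt_one.trans_le (one_le_abs hx)).trans_le
      (le_max_left _ _)) (max_abs_le_abs_mul (one_le_abs hx) (one_le_abs hy)) (by linarith)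
end

section
/- Every irrational p-adic number ξ satisfies μ̂(ξ) = 2, and consequently 2 ≤ μ̂×(ξ) ≤ 4. -/
open Filter MeasureTheory
open scoped ENNReal

/-!
Dirichlet's pigeonhole principle in `ℤ_[p]` gives, for every `X ≥ 1`, a nonzero `(x, y)` with
`max(|x|, |y|) ≤ X` and `|yξ - x|_p ≪ X⁻²`, so `μ̂(ξ) ≥ 2`. For an exponent `m > 1` such solutions
have `xy ≠ 0`, because `|z| |z|_p ≥ 1` for every integer `z ≠ 0`; hence also `μ̂×(ξ) ≥ 2`.

Conversely, suppose `μ̂(ξ) > 2`. A good approximation at a large scale, reduced to its primitive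
point, and a good approximation at a suitably larger scale are linearly independent, so their
determinant `D` is a nonzero integer. Then `1 ≤ |D| |D|_p`, whereas the two approximations give
`|D| |D|_p ≤ 4 X ^ (2 - m)` at the first scale `X`.
Finally, `|xy| ^ (1/2) ≤ X` with `xy ≠ 0` forces `max(|x|, |y|) ≤ X ^ 2`, whence `μ̂×(ξ) ≤ 2 μ̂(ξ)`.
-/

open Set Topology

namespace ENNReal

theorem sSup_ofReal_image_le_ofReal {S : Set ℝ} {b : ℝ} (h : ∀ m ∈ S, m ≤ b) :
    sSup (ENNReal.ofReal '' S) ≤ ENNReal.ofReal b :=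
  sSup_le <| forall_mem_image.mpr fun m hm => ofReal_le_ofReal (h m hm)

theorem ofReal_le_sSup_ofReal_image_s1 {S : Set ℝ} {a b : ℝ} (hab : a < b) (h : Ioo a b ⊆ S) :
    ENNReal.ofReal b ≤ sSup (ENNReal.ofReal '' S) := by
  refine le_of_forall_lt fun c hc => ?_
  have hc' : c.toReal < b := (lt_ofReal_iff_toReal_lt hc.ne_top).mp hc
  set m := (max a c.toReal + b) / 2
  have hm : m ∈ Ioo a b := ⟨by grind, by grind⟩
  calc c < ENNReal.ofReal m := (lt_ofReal_iff_toReal_lt hc.ne_top).mpr (by grind)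
    _ ≤ sSup (ENNReal.ofReal '' S) := le_sSup (mem_image_of_mem _ (h hm))

end ENNReal

namespace Padic

variable {p : ℕ} [hp : Fact p.Prime]

/-- Writing `n = p ^ k * m` with `p ∤ m`, the product is exactly `m`. -/
theorem one_le_natCast_mul_norm_natCast {n : ℕ} (hn : n ≠ 0) :
    1 ≤ (n : ℝ) * ‖(n : ℚ_[p])‖ := by
  obtain ⟨k, m, hpm, rfl⟩ := Nat.exists_eq_pow_mul_and_not_dvd hn p hp.out.ne_one
  have hm : ‖(m : ℚ_[p])‖ = 1 :=
    norm_natCast_eq_one_iff.mpr ((Nat.Prime.coprime_iff_not_dvd hp.out).mpr hpm)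
  have hm1 : (1 : ℝ) ≤ m := by
    exact_mod_cast Nat.one_le_iff_ne_zero.mpr (by rintro rfl; simp at hpm)
  have hp0 : (p : ℝ) ≠ 0 := by exact_mod_cast hp.out.ne_zero
  push_cast
  rw [norm_mul, norm_pow, norm_p, hm, inv_pow]
  calc (1 : ℝ) ≤ m := hm1
    _ = (p : ℝ) ^ k * m * (((p : ℝ) ^ k)⁻¹ * 1) := by field_simp

theorem one_le_abs_mul_norm_intCast {z : ℤ} (hz : z ≠ 0) : 1 ≤ |(z : ℝ)| * ‖(z : ℚ_[p])‖ := by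
  have h := one_le_natCast_mul_norm_natCast (p := p) (Int.natAbs_ne_zero.mpr hz)
  rcases Int.natAbs_eq z with hz' | hz' <;> rw [hz'] <;> simpa using h

end Padic

namespace PadicInt

variable {p : ℕ} [hp : Fact p.Prime]

/-- Dirichlet's pigeonhole principle in `ℤ_[p]`: the `(N + 1) ^ 2` values of `y ζ - x`
cannot all be distinct modulo `p ^ k`. -/
theorem exists_norm_mul_sub_le (ζ : ℤ_[p]) {N k : ℕ} (h : p ^ k < (N + 1) ^ 2) :
    ∃ x y : ℤ, (x ≠ 0 ∨ y ≠ 0) ∧ |x| ≤ N ∧ |y| ≤ N ∧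
      ‖(y : ℤ_[p]) * ζ - x‖ ≤ (p : ℝ) ^ (-k : ℤ) := by
  let f : Fin (N + 1) × Fin (N + 1) → ZMod (p ^ k) :=
    fun q => toZModPow k ((q.2 : ℕ) * ζ - (q.1 : ℕ))
  have hcard : Fintype.card (ZMod (p ^ k)) < Fintype.card (Fin (N + 1) × Fin (N + 1)) := by
    have : NeZero (p ^ k) := ⟨pow_ne_zero _ hp.out.ne_zero⟩
    simpa [ZMod.card, sq] using h
  obtain ⟨a, b, hab, hfab⟩ := Fintype.exists_ne_map_eq_of_card_lt f hcard
  refine ⟨(a.1 : ℕ) - (b.1 : ℕ), (a.2 : ℕ) - (b.2 : ℕ), ?_, ?_, ?_, ?_⟩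
  · by_contra! h0
    exact hab (Prod.ext (Fin.ext (by omega)) (Fin.ext (by omega)))
  · rw [abs_le]; omega
  · rw [abs_le]; omega
  · rw [norm_le_pow_iff_mem_span_pow, ← ker_toZModPow, RingHom.mem_ker]
    have hsub : f a - f b = 0 := sub_eq_zero.mpr hfab
    simp only [f, ← map_sub] at hsub
    convert hsub using 2
    push_cast
    ring

end PadicInt

namespace PadicApprox

variable {p : ℕ} [hp : Fact p.Prime]

def height (x y : ℤ) : ℝ := max |(x : ℝ)| |(y : ℝ)|

noncomputable def err (ξ : ℚ_[p]) (x y : ℤ) : ℝ := ‖(y : ℚ_[p]) * ξ - x‖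

def IsUniformExponent (ξ : ℚ_[p]) (m : ℝ) : Prop :=
  ∀ᶠ X : ℝ in atTop, ∃ x y : ℤ, 0 < height x y ∧ height x y ≤ X ∧ err ξ x y ≤ X ^ (-m)

def IsUniformMulExponent (ξ : ℚ_[p]) (m : ℝ) : Prop :=
  ∀ᶠ X : ℝ in atTop, ∃ x y : ℤ,
    0 < √|(x : ℝ) * y| ∧ √|(x : ℝ) * y| ≤ X ∧ err ξ x y ≤ X ^ (-m)

theorem muHatExp_eq (ξ : ℚ_[p]) :
    muHatExp p ξ = sSup (ENNReal.ofReal '' {m | IsUniformExponent ξ m}) := rfl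

theorem muHatTimesExp_eq (ξ : ℚ_[p]) :
    muHatTimesExp p ξ = sSup (ENNReal.ofReal '' {m | IsUniformMulExponent ξ m}) := rfl

theorem height_nonneg (x y : ℤ) : 0 ≤ height x y := (abs_nonneg _).trans (le_max_left _ _)

theorem err_nonneg (ξ : ℚ_[p]) (x y : ℤ) : 0 ≤ err ξ x y := norm_nonneg _

theorem height_pos_iff {x y : ℤ} : 0 < height x y ↔ x ≠ 0 ∨ y ≠ 0 := by
  simp [height]

theorem height_comm (x y : ℤ) : height x y = height y x := max_comm _ _

theorem height_mul (c x y : ℤ) : height (c * x) (c * y) = |(c : ℝ)| * height x y := by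
  simp only [height, Int.cast_mul, abs_mul, mul_max_of_nonneg _ _ (abs_nonneg (c : ℝ))]

theorem err_mul (ξ : ℚ_[p]) (c x y : ℤ) :
    err ξ (c * x) (c * y) = ‖(c : ℚ_[p])‖ * err ξ x y := by
  rw [err, err, ← norm_mul]
  push_cast
  ring_nf

theorem err_pos {ξ : ℚ_[p]} (hξ : PadicIrrational p ξ) {x y : ℤ} (h : 0 < height x y) :
    0 < err ξ x y := by
  refine norm_pos_iff.mpr fun h0 => ?_
  rcases eq_or_ne y 0 with rfl | hy
  · simp_all [height_pos_iff]
  · refine hξ ((x : ℚ) / y) ?_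
    have hy' : (y : ℚ_[p]) ≠ 0 := Int.cast_ne_zero.mpr hy
    push_cast
    field_simp
    linear_combination -h0

theorem exists_err_le_of_norm_le_one {ξ : ℚ_[p]} (hξ : ‖ξ‖ ≤ 1) {X : ℝ} (hX : 1 ≤ X) :
    ∃ x y : ℤ, 0 < height x y ∧ height x y ≤ X ∧ err ξ x y ≤ p / X ^ 2 := by
  have hp1 : (1 : ℝ) < p := by exact_mod_cast hp.out.one_lt
  obtain ⟨k, hkX, hXk⟩ := exists_nat_pow_near (one_le_pow₀ hX : 1 ≤ X ^ 2) hp1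
  have hcard : p ^ k < (⌊X⌋₊ + 1) ^ 2 := by
    have : X ^ 2 < ((⌊X⌋₊ : ℝ) + 1) ^ 2 := by gcongr; exact Nat.lt_floor_add_one X
    exact_mod_cast hkX.trans_lt this
  obtain ⟨x, y, hxy, hx, hy, hnorm⟩ := PadicInt.exists_norm_mul_sub_le ⟨ξ, hξ⟩ hcard
  have hN : ((⌊X⌋₊ : ℤ) : ℝ) ≤ X := by exact_mod_cast Nat.floor_le (by linarith)
  refine ⟨x, y, height_pos_iff.mpr hxy, max_le ?_ ?_, ?_⟩
  · rw [← Int.cast_abs]; exact (Int.cast_le.mpr hx).trans hN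
  · rw [← Int.cast_abs]; exact (Int.cast_le.mpr hy).trans hN
  · calc err ξ x y = ‖(y : ℤ_[p]) * ⟨ξ, hξ⟩ - x‖ := by
          rw [err, ← PadicInt.padic_norm_e_of_padicInt]; push_cast; rfl
      _ ≤ (p : ℝ) ^ (-k : ℤ) := hnorm
      _ = p / (p : ℝ) ^ (k + 1) := by
          rw [zpow_neg, zpow_natCast, pow_succ]; field_simp
      _ ≤ p / X ^ 2 := by gcongr

theorem exists_err_le (ξ : ℚ_[p]) {X : ℝ} (hX : 1 ≤ X) :
    ∃ x y : ℤ, 0 < height x y ∧ height x y ≤ X ∧ err ξ x y ≤ max 1 ‖ξ‖ * p / X ^ 2 := by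
  rcases le_or_gt ‖ξ‖ 1 with hξ | hξ
  · simpa [hξ] using exists_err_le_of_norm_le_one hξ hX
  · have hξ0 : ξ ≠ 0 := norm_pos_iff.mp (one_pos.trans hξ)
    obtain ⟨x, y, hpos, hle, herr⟩ :=
      exists_err_le_of_norm_le_one ((norm_inv ξ).trans_le (inv_le_one_of_one_le₀ hξ.le)) hX
    refine ⟨y, x, height_comm x y ▸ hpos, height_comm x y ▸ hle, ?_⟩
    have h : err ξ y x = ‖ξ‖ * err ξ⁻¹ x y := by
      rw [err, err, ← norm_mul, ← norm_neg]
      congr 1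
      field_simp
      ring
    rw [h, max_eq_right hξ.le, mul_div_assoc]
    gcongr

theorem isUniformExponent_of_lt_two (ξ : ℚ_[p]) {m : ℝ} (hm : m < 2) :
    IsUniformExponent ξ m := by
  have hgrow : ∀ᶠ X : ℝ in atTop, max 1 ‖ξ‖ * p ≤ X ^ (2 - m) :=
    (tendsto_rpow_atTop (by linarith)).eventually_ge_atTop _
  filter_upwards [hgrow, eventually_ge_atTop 1] with X hgrow hX
  obtain ⟨x, y, hpos, hle, herr⟩ := exists_err_le ξ hX
  refine ⟨x, y, hpos, hle, herr.trans ?_⟩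
  have hX0 : 0 < X := by linarith
  calc max 1 ‖ξ‖ * p / X ^ 2 ≤ X ^ (2 - m) / X ^ (2 : ℝ) := by
        rw [Real.rpow_two]; gcongr
    _ = X ^ (-m) := by rw [← Real.rpow_sub hX0]; ring_nf

theorem eventually_ne_zero_of_err_le {ξ : ℚ_[p]} (hξ : ξ ≠ 0) {m : ℝ} (hm : 1 < m) :
    ∀ᶠ X : ℝ in atTop, ∀ x y : ℤ, 0 < height x y → height x y ≤ X → err ξ x y ≤ X ^ (-m) →
      x ≠ 0 ∧ y ≠ 0 := by
  have hsmall : ∀ᶠ X : ℝ in atTop, X ^ (-(m - 1)) < min 1 ‖ξ‖ :=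
    (tendsto_rpow_neg_atTop (by linarith)).eventually_lt_const
      (lt_min one_pos (norm_pos_iff.mpr hξ))
  filter_upwards [hsmall, eventually_gt_atTop 0] with X hsmall hX0 x y hpos hle herr
  -- an integer `z ≠ 0` with `|z| ≤ X` has `|z|_p ≥ 1 / X`
  have key : ∀ {z : ℤ} {c : ℝ}, z ≠ 0 → |(z : ℝ)| ≤ X → 0 ≤ c →
      ‖(z : ℚ_[p])‖ * c ≤ X ^ (-m) → c < min 1 ‖ξ‖ := by
    intro z c hz hzX hc h
    calc c ≤ (|(z : ℝ)| * ‖(z : ℚ_[p])‖) * c :=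
          le_mul_of_one_le_left hc (Padic.one_le_abs_mul_norm_intCast hz)
      _ = |(z : ℝ)| * (‖(z : ℚ_[p])‖ * c) := mul_assoc _ _ _
      _ ≤ X * X ^ (-m) := by gcongr
      _ = X ^ (-(m - 1)) := by rw [← Real.rpow_one_add' hX0.le (by linarith)]; ring_nf
      _ < min 1 ‖ξ‖ := hsmall
  constructor
  · rintro rfl
    have hy : y ≠ 0 := by simpa using height_pos_iff.mp hpos
    have := key hy (le_max_right _ _ |>.trans hle) (norm_nonneg ξ)
      (by simpa [err, norm_mul] using herr)
    exact (min_le_right _ _).not_gt this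
  · rintro rfl
    have hx : x ≠ 0 := by simpa using height_pos_iff.mp hpos
    have := key hx (le_max_left _ _ |>.trans hle) zero_le_one (by simpa [err] using herr)
    exact (min_le_left _ _).not_gt this

theorem isUniformMulExponent_of_lt_two {ξ : ℚ_[p]} (hξ : ξ ≠ 0) {m : ℝ} (hm1 : 1 < m)
    (hm2 : m < 2) : IsUniformMulExponent ξ m := by
  filter_upwards [isUniformExponent_of_lt_two ξ hm2, eventually_ne_zero_of_err_le hξ hm1,
    eventually_ge_atTop 0] with X ⟨x, y, hpos, hle, herr⟩ hne hX0
  obtain ⟨hx, hy⟩ := hne x y hpos hle herr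
  refine ⟨x, y, Real.sqrt_pos.mpr (abs_pos.mpr (by simpa using And.intro hx hy)), ?_, herr⟩
  calc √|(x : ℝ) * y| ≤ √(X ^ 2) := by
        rw [abs_mul, sq]
        gcongr
        exacts [le_max_left _ _ |>.trans hle, le_max_right _ _ |>.trans hle]
    _ = X := Real.sqrt_sq hX0

theorem err_mul_height_pow_le {ξ : ℚ_[p]} {x y : ℤ} {X m : ℝ} (hX : 0 < X)
    (hH : height x y ≤ X) (he : err ξ x y ≤ X ^ (-m)) (n : ℕ) :
    err ξ x y * height x y ^ n ≤ X ^ (n - m) := by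
  calc err ξ x y * height x y ^ n ≤ X ^ (-m) * X ^ n :=
        mul_le_mul he (pow_le_pow_left₀ (height_nonneg x y) hH n)
          (pow_nonneg (height_nonneg x y) n) (by positivity)
    _ = X ^ (n - m) := by rw [← Real.rpow_natCast, ← Real.rpow_add hX]; ring_nf

/-- Along a rational line through the origin, `|yξ - x|_p max(|x|, |y|) ^ n` is smallest at the
primitive point, because `|c| |c|_p ≥ 1` for every integer `c ≠ 0`. -/
theorem err_mul_height_pow_le_of_mul (ξ : ℚ_[p]) {c : ℤ} (hc : c ≠ 0) (x y : ℤ) {n : ℕ}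
    (hn : n ≠ 0) :
    err ξ x y * height x y ^ n ≤ err ξ (c * x) (c * y) * height (c * x) (c * y) ^ n := by
  obtain ⟨k, rfl⟩ := Nat.exists_eq_succ_of_ne_zero hn
  have hc1 : (1 : ℝ) ≤ |(c : ℝ)| := by exact_mod_cast Int.one_le_abs hc
  have hprod : 1 ≤ (|(c : ℝ)| * ‖(c : ℚ_[p])‖) * |(c : ℝ)| ^ k :=
    one_le_mul_of_one_le_of_one_le (Padic.one_le_abs_mul_norm_intCast hc) (one_le_pow₀ hc1)
  calc err ξ x y * height x y ^ (k + 1)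
      ≤ (|(c : ℝ)| * ‖(c : ℚ_[p])‖) * |(c : ℝ)| ^ k * (err ξ x y * height x y ^ (k + 1)) :=
        le_mul_of_one_le_left
          (mul_nonneg (err_nonneg ξ x y) (pow_nonneg (height_nonneg x y) _)) hprod
    _ = err ξ (c * x) (c * y) * height (c * x) (c * y) ^ (k + 1) := by
        rw [err_mul, height_mul]; ring

theorem exists_eq_mul_of_isCoprime {x₀ y₀ x y : ℤ} (h : IsCoprime x₀ y₀)
    (hD : x₀ * y - x * y₀ = 0) : ∃ c : ℤ, x = c * x₀ ∧ y = c * y₀ := by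
  obtain ⟨u, v, huv⟩ := h
  exact ⟨u * x + v * y, by linear_combination -x * huv - v * hD,
    by linear_combination -y * huv + u * hD⟩

/-- A nonzero integer determinant `D` of two approximations is bounded below through
`1 ≤ |D| |D|_p`, while `|D|_p` is controlled by the two linear forms. -/
theorem one_le_two_mul_height_mul_height_mul_max_err (ξ : ℚ_[p]) {x y x' y' : ℤ}
    (hD : x * y' - x' * y ≠ 0) :
    1 ≤ 2 * height x y * height x' y' * max (err ξ x y) (err ξ x' y') := by
  have hnorm : ‖((x * y' - x' * y : ℤ) : ℚ_[p])‖ ≤ max (err ξ x y) (err ξ x' y') := by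
    have hD' : ((x * y' - x' * y : ℤ) : ℚ_[p]) =
        (y : ℚ_[p]) * ((y' : ℚ_[p]) * ξ - x') + (y' : ℚ_[p]) * (x - (y : ℚ_[p]) * ξ) := by
      push_cast; ring
    rw [hD']
    refine (Padic.nonarchimedean _ _).trans (max_le ?_ ?_)
    · rw [norm_mul]
      exact (mul_le_of_le_one_left (err_nonneg ξ x' y') (Padic.norm_int_le_one y)).trans
        (le_max_right _ _)
    · rw [norm_mul, norm_sub_rev]
      exact (mul_le_of_le_one_left (err_nonneg ξ x y) (Padic.norm_int_le_one y')).trans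
        (le_max_left _ _)
  have habs : |((x * y' - x' * y : ℤ) : ℝ)| ≤ 2 * height x y * height x' y' := by
    have hx : |(x : ℝ)| ≤ height x y := le_max_left _ _
    have hy : |(y : ℝ)| ≤ height x y := le_max_right _ _
    have hx' : |(x' : ℝ)| ≤ height x' y' := le_max_left _ _
    have hy' : |(y' : ℝ)| ≤ height x' y' := le_max_right _ _
    push_cast
    calc |(x : ℝ) * y' - x' * y| ≤ |(x : ℝ)| * |(y' : ℝ)| + |(x' : ℝ)| * |(y : ℝ)| := by
          rw [← abs_mul, ← abs_mul]; exact abs_sub _ _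
      _ ≤ height x y * height x' y' + height x' y' * height x y := by
          gcongr <;> exact height_nonneg _ _
      _ = 2 * height x y * height x' y' := by ring
  calc (1 : ℝ) ≤ |((x * y' - x' * y : ℤ) : ℝ)| * ‖((x * y' - x' * y : ℤ) : ℚ_[p])‖ :=
        Padic.one_le_abs_mul_norm_intCast hD
    _ ≤ 2 * height x y * height x' y' * max (err ξ x y) (err ξ x' y') := by
        gcongr
        exact mul_nonneg (mul_nonneg zero_le_two (height_nonneg x y)) (height_nonneg x' y')

theorem one_le_of_err_mul_height_lt (ξ : ℚ_[p]) {x y x' y' : ℤ} (hxy : IsCoprime x y)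
    (hpos : 0 < height x' y') (hlt : err ξ x' y' * height x' y' < err ξ x y * height x y) :
    1 ≤ 2 * height x y * height x' y' * max (err ξ x y) (err ξ x' y') := by
  refine one_le_two_mul_height_mul_height_mul_max_err ξ fun hD => ?_
  obtain ⟨c, rfl, rfl⟩ := exists_eq_mul_of_isCoprime hxy hD
  have hc : c ≠ 0 := by rintro rfl; simp [height] at hpos
  exact (err_mul_height_pow_le_of_mul ξ hc x y one_ne_zero).not_gt (by simpa using hlt)

theorem exists_isCoprime_err_mul_height_pow_le {ξ : ℚ_[p]} {x y : ℤ} {X m : ℝ} (hX : 0 < X)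
    (hpos : 0 < height x y) (hH : height x y ≤ X) (he : err ξ x y ≤ X ^ (-m)) :
    ∃ x₀ y₀ : ℤ, IsCoprime x₀ y₀ ∧ 0 < height x₀ y₀ ∧
      ∀ n : ℕ, n ≠ 0 → err ξ x₀ y₀ * height x₀ y₀ ^ n ≤ X ^ ((n : ℝ) - m) := by
  obtain ⟨g, x₀, y₀, -, hcop, rfl, rfl⟩ :=
    Int.exists_gcd_one' (Int.gcd_pos_iff.mpr (height_pos_iff.mp hpos))
  rw [mul_comm x₀, mul_comm y₀] at hpos hH he
  have hg : (g : ℤ) ≠ 0 := by rintro h; simp [h, height] at hpos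
  refine ⟨x₀, y₀, Int.isCoprime_iff_gcd_eq_one.mpr hcop, ?_, fun n hn => ?_⟩
  · rw [height_mul] at hpos
    exact pos_of_mul_pos_right hpos (abs_nonneg _)
  · exact (err_mul_height_pow_le_of_mul ξ hg x₀ y₀ hn).trans (err_mul_height_pow_le hX hH he n)

/-- Once `Y ^ (1 - m)` drops below `|y₀ξ - x₀|_p max(|x₀|, |y₀|)`, an approximation at scale `Y`
cannot lie on the line through the primitive point `(x₀, y₀)`. -/
theorem one_le_of_rpow_lt_err_mul_height {ξ : ℚ_[p]} {x₀ y₀ x y : ℤ} {Y m : ℝ}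
    (hcop : IsCoprime x₀ y₀) (hY : 0 < Y) (hYE : Y ^ (1 - m) < err ξ x₀ y₀ * height x₀ y₀)
    (hpos : 0 < height x y) (hH : height x y ≤ Y) (he : err ξ x y ≤ Y ^ (-m)) :
    1 ≤ 2 * height x₀ y₀ * Y * max (err ξ x₀ y₀) (Y ^ (-m)) := by
  have hlt : err ξ x y * height x y < err ξ x₀ y₀ * height x₀ y₀ := by
    have h := err_mul_height_pow_le hY hH he 1
    rw [pow_one, Nat.cast_one] at h
    exact h.trans_lt hYE
  calc (1 : ℝ) ≤ 2 * height x₀ y₀ * height x y * max (err ξ x₀ y₀) (err ξ x y) :=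
        one_le_of_err_mul_height_lt ξ hcop hpos hlt
    _ ≤ 2 * height x₀ y₀ * Y * max (err ξ x₀ y₀) (Y ^ (-m)) := by
        have h0 : 0 ≤ 2 * height x₀ y₀ := mul_nonneg zero_le_two (height_nonneg x₀ y₀)
        exact mul_le_mul (mul_le_mul_of_nonneg_left hH h0) (max_le_max le_rfl he)
          (le_max_of_le_left (err_nonneg ξ x₀ y₀)) (mul_nonneg h0 hY.le)

/-- Take a good approximation at a large scale `X` and its primitive point `(x₀, y₀)`, so that
`E = |y₀ξ - x₀|_p max(|x₀|, |y₀|) ≤ X ^ (1 - m)`. The second scale is `Y = 2T` with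
`T ^ (1 - m) = E`; then `T ≥ X`, and the previous lemma gives `1 ≤ 4 X ^ (2 - m)`. -/
theorem le_two_of_isUniformExponent {ξ : ℚ_[p]} (hξ : PadicIrrational p ξ) {m : ℝ}
    (hm : IsUniformExponent ξ m) : m ≤ 2 := by
  by_contra! hm2
  obtain ⟨C, hC⟩ := eventually_atTop.mp hm
  have hdecay : Tendsto (fun X : ℝ => X ^ (2 - m)) atTop (𝓝 0) := by
    simpa only [neg_sub] using tendsto_rpow_neg_atTop (y := m - 2) (by linarith)
  obtain ⟨X, hXC, hX0, hXsmall⟩ : ∃ X, C ≤ X ∧ 0 < X ∧ X ^ (2 - m) < 1 / 4 :=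
    ((eventually_ge_atTop C).and ((eventually_gt_atTop 0).and
      (hdecay.eventually_lt_const (by norm_num)))).exists
  obtain ⟨x₁, y₁, hpos₁, hle₁, herr₁⟩ := hC X hXC
  obtain ⟨x₀, y₀, hcop, hpos₀, hbound⟩ :=
    exists_isCoprime_err_mul_height_pow_le hX0 hpos₁ hle₁ herr₁
  set E := err ξ x₀ y₀ * height x₀ y₀ with hE
  have hE0 : 0 < E := mul_pos (err_pos hξ hpos₀) hpos₀
  have hEX : E ≤ X ^ (1 - m) := by simpa using hbound 1 one_ne_zero
  have hFX : height x₀ y₀ * E ≤ X ^ (2 - m) :=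
    calc height x₀ y₀ * E = err ξ x₀ y₀ * height x₀ y₀ ^ 2 := by rw [hE]; ring
      _ ≤ X ^ (2 - m) := by simpa using hbound 2 two_ne_zero
  set T := E ^ (1 - m)⁻¹
  have hT0 : 0 < T := Real.rpow_pos_of_pos hE0 _
  have hTE : T ^ (1 - m) = E := Real.rpow_inv_rpow hE0.le (by linarith : 1 - m < 0).ne
  have hXT : X ≤ T := (Real.rpow_le_rpow_iff_of_neg hT0 hX0 (by linarith)).mp (hTE ▸ hEX)
  have hYE : (2 * T) ^ (1 - m) < E := by
    rw [Real.mul_rpow zero_le_two hT0.le, hTE]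
    exact mul_lt_of_lt_one_left hE0 (Real.rpow_lt_one_of_one_lt_of_neg one_lt_two (by linarith))
  obtain ⟨x₂, y₂, hpos₂, hle₂, herr₂⟩ := hC (2 * T) (by linarith)
  have key := one_le_of_rpow_lt_err_mul_height hcop (by positivity) hYE hpos₂ hle₂ herr₂
  have h₀ : height x₀ y₀ * (2 * T) * err ξ x₀ y₀ ≤ 2 * X ^ (2 - m) :=
    calc height x₀ y₀ * (2 * T) * err ξ x₀ y₀ = 2 * (T * T ^ (1 - m)) := by rw [hTE, hE]; ring
      _ = 2 * T ^ (2 - m) := by rw [mul_comm T, ← Real.rpow_add_one hT0.ne']; ring_nf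
      _ ≤ 2 * X ^ (2 - m) :=
          mul_le_mul_of_nonneg_left (Real.rpow_le_rpow_of_nonpos hX0 hXT (by linarith)) zero_le_two
  have h₂ : height x₀ y₀ * (2 * T) * (2 * T) ^ (-m) ≤ X ^ (2 - m) :=
    calc height x₀ y₀ * (2 * T) * (2 * T) ^ (-m) = height x₀ y₀ * (2 * T) ^ (1 - m) := by
          rw [mul_assoc, ← Real.rpow_one_add' (by positivity) (by linarith)]; ring_nf
      _ ≤ height x₀ y₀ * E := mul_le_mul_of_nonneg_left hYE.le (height_nonneg x₀ y₀)
      _ ≤ X ^ (2 - m) := hFX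
  rw [mul_assoc 2, mul_assoc 2,
    mul_max_of_nonneg _ _ (mul_nonneg (height_nonneg x₀ y₀) (by positivity))] at key
  have := max_le h₀ (h₂.trans (le_mul_of_one_le_left (Real.rpow_nonneg hX0.le _) one_le_two))
  linarith

theorem isUniformExponent_half_of_isUniformMulExponent {ξ : ℚ_[p]} {m : ℝ}
    (hm : IsUniformMulExponent ξ m) : IsUniformExponent ξ (m / 2) := by
  filter_upwards [Real.tendsto_sqrt_atTop.eventually hm, eventually_ge_atTop 0]
    with Y ⟨x, y, hpos, hle, herr⟩ hY0
  have hxy : (x : ℝ) * y ≠ 0 := abs_pos.mp (Real.sqrt_pos.mp hpos)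
  have hx0 : x ≠ 0 := by exact_mod_cast left_ne_zero_of_mul hxy
  have hx : (1 : ℝ) ≤ |(x : ℝ)| := by exact_mod_cast Int.one_le_abs hx0
  have hy : (1 : ℝ) ≤ |(y : ℝ)| := by
    exact_mod_cast Int.one_le_abs (by exact_mod_cast right_ne_zero_of_mul hxy)
  refine ⟨x, y, height_pos_iff.mpr (.inl hx0), ?_, ?_⟩
  · calc height x y ≤ |(x : ℝ)| * |(y : ℝ)| :=
          max_le (le_mul_of_one_le_right (abs_nonneg _) hy)
            (le_mul_of_one_le_left (abs_nonneg _) hx)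
      _ ≤ Y := by rwa [Real.sqrt_le_sqrt_iff hY0, abs_mul] at hle
  · rwa [Real.sqrt_eq_rpow, ← Real.rpow_mul hY0, one_div_mul_eq_div, neg_div] at herr

end PadicApprox

open PadicApprox

/-- Every irrational `p`-adic number `ξ` satisfies `μ̂(ξ) = 2`, and consequently
`2 ≤ μ̂×(ξ) ≤ 4`. -/
theorem statement1 (p : ℕ) [Fact p.Prime] (ξ : ℚ_[p]) (hξ : PadicIrrational p ξ) :
    muHatExp p ξ = 2 ∧ 2 ≤ muHatTimesExp p ξ ∧ muHatTimesExp p ξ ≤ 4 := by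
  have hξ0 : ξ ≠ 0 := fun h => hξ 0 (by simp [h])
  rw [muHatExp_eq, muHatTimesExp_eq]
  refine ⟨le_antisymm ?_ ?_, ?_, ?_⟩
  · exact (ENNReal.sSup_ofReal_image_le_ofReal fun m hm =>
      le_two_of_isUniformExponent hξ hm).trans_eq (ENNReal.ofReal_ofNat 2)
  · exact (ENNReal.ofReal_ofNat 2).symm.trans_le <| ENNReal.ofReal_le_sSup_ofReal_image_s1 one_lt_two
      fun m hm => isUniformExponent_of_lt_two ξ hm.2
  · exact (ENNReal.ofReal_ofNat 2).symm.trans_le <| ENNReal.ofReal_le_sSup_ofReal_image_s1 one_lt_two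
      fun m hm => isUniformMulExponent_of_lt_two hξ0 hm.1 hm.2
  · refine (ENNReal.sSup_ofReal_image_le_ofReal fun m hm => ?_).trans_eq
      (ENNReal.ofReal_ofNat 4)
    linarith [le_two_of_isUniformExponent hξ (isUniformExponent_half_of_isUniformMulExponent hm)]
end

section
/- With respect to an additive Haar measure on ℚ_p, almost every p-adic number ξ is irrational and satisfies μ×(ξ) = 2; that is, the set of ξ ∈ ℚ_p such that ξ is rational or μ×(ξ) ≠ 2 is a null set. -/
open Filter MeasureTheory
open scoped ENNReal

/-!
Lower bound: for irrational `ξ` with `‖p ^ k * ξ‖ ≤ 1`, take `y = p ^ k` and `x` a positive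
integer congruent to `p ^ k * ξ` modulo `p ^ n` with `x ≤ p ^ (n + 1)`. Then
`0 < |yξ - x|_p ≤ p ^ (-n)` while `|xy| ≤ p ^ (n + k + 1)`, so for every `m < 2` there are
infinitely many solutions, and `μ×(ξ) ≥ 2`.

Upper bound: fix `m > 2` and `ξ` in the ball of radius `p ^ k`. A solution `(x, y)` puts `ξ` in
the ball around `x / y` of radius `p ^ v_p(y) * |xy| ^ (-m/2)`, whose Haar measure is at most
`p` times its radius times that of the unit ball, and it forces `p ^ (v_p(y) - k) ∣ x`.
Writing `x = p ^ (v_p(y) - k) * a`, these measures are bounded by a constant multiple of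
`|a| ^ (-m/2) * |y| ^ (-m/2)`, which is summable over pairs of integers, so by Borel–Cantelli
almost every `ξ` has only finitely many solutions. The rationals are countable, hence null.
-/

open Metric

lemma Set.infinite_of_pos_of_forall_exists_lt {α : Type*} {S : Set α} {f : α → ℝ}
    (hpos : ∀ a ∈ S, 0 < f a) (hsmall : ∀ ε > 0, ∃ a ∈ S, f a < ε) : S.Infinite := by
  intro hfin
  obtain ⟨a, ha, -⟩ := hsmall 1 one_pos
  obtain ⟨a, ha, hmin⟩ := S.exists_min_image f hfin ⟨a, ha⟩
  obtain ⟨b, hb, hlt⟩ := hsmall (f a) (hpos a ha)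
  exact (hmin b hb).not_gt hlt

lemma Real.sqrt_rpow_neg {t : ℝ} (ht : 0 ≤ t) (m : ℝ) : √t ^ (-m) = t ^ (-(m / 2)) := by
  rw [Real.sqrt_eq_rpow, ← Real.rpow_mul ht]
  ring_nf

lemma Real.zpow_neg_le_sqrt_rpow_neg {b t m : ℝ} {n N : ℕ} (hb : 1 ≤ b) (ht : 0 < t)
    (htN : t ≤ b ^ N) (hm : 0 ≤ m) (hmN : N * m ≤ 2 * n) :
    b ^ (-(n : ℤ)) ≤ √t ^ (-m) := by
  have hb0 : 0 < b := one_pos.trans_le hb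
  calc b ^ (-(n : ℤ)) = b ^ (-(n : ℝ)) := by rw [← Real.rpow_intCast]; push_cast; rfl
    _ ≤ b ^ ((N : ℝ) * -(m / 2)) := Real.rpow_le_rpow_of_exponent_le hb (by linarith)
    _ = (b ^ N) ^ (-(m / 2)) := by rw [Real.rpow_mul hb0.le, Real.rpow_natCast]
    _ ≤ t ^ (-(m / 2)) := Real.rpow_le_rpow_of_nonpos ht htN (by linarith)
    _ = √t ^ (-m) := (Real.sqrt_rpow_neg ht.le m).symm

lemma Int.pow_padicValInt_le_abs {p : ℕ} {y : ℤ} (hy : y ≠ 0) :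
    (p : ℝ) ^ padicValInt p y ≤ |(y : ℝ)| := by
  rw [← Int.cast_abs]
  exact_mod_cast Int.le_of_dvd (abs_pos.mpr hy) ((dvd_abs _ _).mpr (padicValInt_dvd y))

lemma one_le_abs_intCast_mul {x y : ℤ} (hx : x ≠ 0) (hy : y ≠ 0) : 1 ≤ |(x : ℝ) * y| := by
  rw [← Int.cast_mul, ← Int.cast_abs, ← Int.cast_one, Int.cast_le]
  exact Int.one_le_abs (mul_ne_zero hx hy)

variable {p : ℕ} [hp : Fact p.Prime]

lemma PadicInt.exists_nat_pos_le_norm_sub_le (z : ℤ_[p]) (n : ℕ) :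
    ∃ a : ℕ, 0 < a ∧ a ≤ p ^ (n + 1) ∧ ‖z - a‖ ≤ (p : ℝ) ^ (-(n : ℤ)) := by
  have hpn : 0 < p ^ n := pow_pos hp.out.pos n
  refine ⟨z.appr n + p ^ n, by omega, ?_, ?_⟩
  · calc z.appr n + p ^ n ≤ p ^ n + p ^ n := by have := z.appr_lt n; omega
      _ ≤ p ^ (n + 1) := by rw [pow_succ]; nlinarith [hp.out.two_le]
  · rw [PadicInt.norm_le_pow_iff_mem_span_pow]
    have hpow : ((p ^ n : ℕ) : ℤ_[p]) ∈ Ideal.span {(p : ℤ_[p]) ^ n} :=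
      Ideal.subset_span (by simp)
    simpa [sub_add_eq_sub_sub] using Ideal.sub_mem _ (z.appr_spec n) hpow

def mulApproxSet (p : ℕ) [Fact p.Prime] (ξ : ℚ_[p]) (m : ℝ) : Set (ℤ × ℤ) :=
  {q : ℤ × ℤ | q.1 ≠ 0 ∧ q.2 ≠ 0 ∧
    0 < ‖(q.2 : ℚ_[p]) * ξ - (q.1 : ℚ_[p])‖ ∧
    ‖(q.2 : ℚ_[p]) * ξ - (q.1 : ℚ_[p])‖ ≤ (Real.sqrt |(q.1 : ℝ) * (q.2 : ℝ)|) ^ (-m)}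

lemma muTimesExp_eq_sSup (ξ : ℚ_[p]) :
    muTimesExp p ξ = sSup (ENNReal.ofReal '' {m : ℝ | (mulApproxSet p ξ m).Infinite}) := rfl

lemma mulApproxSet_anti (ξ : ℚ_[p]) {m m' : ℝ} (h : m' ≤ m) :
    mulApproxSet p ξ m ⊆ mulApproxSet p ξ m' := by
  rintro ⟨x, y⟩ ⟨hx, hy, hpos, hle⟩
  have h1 : 1 ≤ √|(x : ℝ) * y| := Real.one_le_sqrt.mpr (one_le_abs_intCast_mul hx hy)
  exact ⟨hx, hy, hpos, hle.trans (Real.rpow_le_rpow_of_exponent_le h1 (neg_le_neg h))⟩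

lemma PadicIrrational.intCast_mul_sub_ne_zero {ξ : ℚ_[p]} (hξ : PadicIrrational p ξ) (x : ℤ)
    {y : ℤ} (hy : y ≠ 0) : (y : ℚ_[p]) * ξ - x ≠ 0 := by
  intro h
  apply hξ (x / y)
  have hy' : (y : ℚ_[p]) ≠ 0 := by exact_mod_cast hy
  rw [Rat.cast_div, Rat.cast_intCast, Rat.cast_intCast, div_eq_iff hy', ← sub_eq_zero.mp h,
    mul_comm]

lemma exists_mem_mulApproxSet_norm_lt {ξ : ℚ_[p]} (hξ : PadicIrrational p ξ) {m : ℝ}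
    (hm0 : 0 ≤ m) (hm2 : m < 2) {ε : ℝ} (hε : 0 < ε) :
    ∃ q ∈ mulApproxSet p ξ m, ‖(q.2 : ℚ_[p]) * ξ - q.1‖ < ε := by
  have hp1 : (1 : ℝ) < p := by exact_mod_cast hp.out.one_lt
  obtain ⟨k, hk⟩ := pow_unbounded_of_one_lt ‖ξ‖ hp1
  have hη : ‖(p : ℚ_[p]) ^ k * ξ‖ ≤ 1 := by
    rw [norm_mul, norm_pow, Padic.norm_p, inv_pow]
    exact inv_mul_le_one_of_le₀ hk.le (by positivity)
  have hsmall : ∀ᶠ n : ℕ in atTop, (p : ℝ) ^ (-(n : ℤ)) < ε := by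
    simp only [zpow_neg, zpow_natCast, ← inv_pow]
    exact (tendsto_pow_atTop_nhds_zero_of_lt_one (by positivity)
      (inv_lt_one_of_one_lt₀ hp1)).eventually (gt_mem_nhds hε)
  have hexp : ∀ᶠ n : ℕ in atTop, ((n + 1 + k : ℕ) : ℝ) * m ≤ 2 * n := by
    filter_upwards [(tendsto_natCast_atTop_atTop (R := ℝ)).eventually_ge_atTop
      ((1 + k) * m / (2 - m))] with n hn
    rw [div_le_iff₀ (by linarith)] at hn
    push_cast
    nlinarith
  obtain ⟨n, hnε, hnm⟩ := (hsmall.and hexp).exists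
  obtain ⟨a, ha0, hale, hnorm⟩ := PadicInt.exists_nat_pos_le_norm_sub_le ⟨_, hη⟩ n
  have hy : ((p : ℤ) ^ k) ≠ 0 := pow_ne_zero _ (by exact_mod_cast hp.out.ne_zero)
  replace hnorm : ‖(((p : ℤ) ^ k : ℤ) : ℚ_[p]) * ξ - ((a : ℤ) : ℚ_[p])‖ ≤
      (p : ℝ) ^ (-(n : ℤ)) := by
    push_cast; exact hnorm
  have ha : (a : ℤ) ≠ 0 := by exact_mod_cast ha0.ne'
  refine ⟨((a : ℤ), (p : ℤ) ^ k), ⟨ha, hy,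
    norm_pos_iff.mpr (hξ.intCast_mul_sub_ne_zero _ hy), hnorm.trans ?_⟩, hnorm.trans_lt hnε⟩
  refine Real.zpow_neg_le_sqrt_rpow_neg hp1.le
    (one_pos.trans_le (one_le_abs_intCast_mul ha hy)) ?_ hm0 hnm
  have : (a : ℝ) ≤ (p : ℝ) ^ (n + 1) := by exact_mod_cast hale
  rw [abs_of_nonneg (by positivity), pow_add]
  push_cast
  gcongr

lemma PadicIrrational.mulApproxSet_infinite {ξ : ℚ_[p]} (hξ : PadicIrrational p ξ) {m : ℝ}
    (hm : m < 2) : (mulApproxSet p ξ m).Infinite := by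
  refine Set.Infinite.mono (mulApproxSet_anti ξ (le_max_left m 0)) ?_
  exact Set.infinite_of_pos_of_forall_exists_lt (fun q hq => hq.2.2.1)
    (fun ε hε => exists_mem_mulApproxSet_norm_lt hξ (le_max_right m 0) (max_lt hm two_pos) hε)

lemma PadicIrrational.two_le_muTimesExp {ξ : ℚ_[p]} (hξ : PadicIrrational p ξ) :
    2 ≤ muTimesExp p ξ := by
  refine le_of_forall_lt_imp_le_of_dense fun c hc => ?_
  have hc' : c.toReal < 2 := by
    simpa using (ENNReal.toReal_lt_toReal hc.ne_top (by simp)).mpr hc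
  rw [← ENNReal.ofReal_toReal hc.ne_top]
  exact le_sSup ⟨c.toReal, hξ.mulApproxSet_infinite hc', rfl⟩

lemma IsUltrametricDist.disjoint_closedBall_of_lt_dist {X : Type*} [PseudoMetricSpace X]
    [IsUltrametricDist X] {x y : X} {r : ℝ} (h : r < dist x y) :
    Disjoint (closedBall x r) (closedBall y r) := by
  refine Set.disjoint_left.mpr fun z hzx hzy => h.not_ge ?_
  exact (dist_triangle_max x z y).trans (max_le (dist_comm x z ▸ hzx) hzy)

lemma Padic.natCast_lt_dist_natCast {a b n : ℕ} (ha : a < p ^ n) (hb : b < p ^ n)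
    (hab : a ≠ b) :
    (p : ℝ) ^ (-(n : ℤ)) < dist (a : ℚ_[p]) b := by
  rw [dist_eq_norm, ← not_le, ← Int.cast_natCast a, ← Int.cast_natCast b, ← Int.cast_sub,
    Padic.norm_int_le_pow_iff_dvd]
  intro hdvd
  have ha' : (a : ℤ) < (p : ℤ) ^ n := by exact_mod_cast ha
  have hb' : (b : ℤ) < (p : ℤ) ^ n := by exact_mod_cast hb
  have := Int.eq_zero_of_abs_lt_dvd hdvd (by rw [abs_lt]; omega)
  omega

lemma Padic.norm_intCast_eq_zpow {y : ℤ} (hy : y ≠ 0) :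
    ‖(y : ℚ_[p])‖ = (p : ℝ) ^ (-(padicValInt p y : ℤ)) := by
  rw [Padic.norm_eq_zpow_neg_valuation (by exact_mod_cast hy), Padic.valuation_intCast]

lemma Padic.inv_abs_le_norm_intCast {y : ℤ} (hy : y ≠ 0) :
    |(y : ℝ)|⁻¹ ≤ ‖(y : ℚ_[p])‖ := by
  rw [Padic.norm_intCast_eq_zpow hy, zpow_neg, zpow_natCast]
  exact inv_anti₀ (pow_pos (by exact_mod_cast hp.out.pos) _) (Int.pow_padicValInt_le_abs hy)

lemma sqrt_rpow_neg_le_norm_intCast {x y : ℤ} (hx : x ≠ 0) (hy : y ≠ 0) {m : ℝ}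
    (hm : 2 ≤ m) :
    √|(x : ℝ) * y| ^ (-m) ≤ ‖(y : ℚ_[p])‖ := by
  have ht := one_le_abs_intCast_mul hx hy
  have hy' : 0 < |(y : ℝ)| := abs_pos.mpr (by exact_mod_cast hy)
  calc √|(x : ℝ) * y| ^ (-m) ≤ √|(x : ℝ) * y| ^ (-2 : ℝ) :=
        Real.rpow_le_rpow_of_exponent_le (Real.one_le_sqrt.mpr ht) (by linarith)
    _ = |(x : ℝ) * y|⁻¹ := by
        rw [Real.sqrt_rpow_neg (abs_nonneg _)]; norm_num [Real.rpow_neg_one]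
    _ ≤ |(y : ℝ)|⁻¹ := by
        refine inv_anti₀ hy' ?_
        rw [abs_mul]
        exact le_mul_of_one_le_left hy'.le (by simpa using one_le_abs_intCast_mul hx one_ne_zero)
    _ ≤ ‖(y : ℚ_[p])‖ := Padic.inv_abs_le_norm_intCast hy

variable (p) in
def mulApproxBall (k : ℕ) (m : ℝ) (q : ℤ × ℤ) : Set ℚ_[p] :=
  {ξ | ‖ξ‖ ≤ (p : ℝ) ^ k ∧ q ∈ mulApproxSet p ξ m}

lemma pow_sub_dvd_of_mem_mulApproxBall {k : ℕ} {m : ℝ} (hm : 2 ≤ m) {x y : ℤ} {ξ : ℚ_[p]}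
    (hξ : ξ ∈ mulApproxBall p k m (x, y)) : (p : ℤ) ^ (padicValInt p y - k) ∣ x := by
  obtain ⟨hξk, hx, hy, -, hle⟩ : ‖ξ‖ ≤ (p : ℝ) ^ k ∧ x ≠ 0 ∧ y ≠ 0 ∧ _ ∧
    ‖(y : ℚ_[p]) * ξ - x‖ ≤ √|(x : ℝ) * y| ^ (-m) := hξ
  rw [← Padic.norm_int_le_pow_iff_dvd]
  rcases le_total (padicValInt p y) k with hvk | hkv
  · simpa [Nat.sub_eq_zero_of_le hvk] using Padic.norm_int_le_one (p := p) x
  have hp1 : (1 : ℝ) ≤ p := by exact_mod_cast hp.out.one_lt.le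
  have hnorm_y : ‖(y : ℚ_[p])‖ ≤ ‖(y : ℚ_[p])‖ * (p : ℝ) ^ k :=
    le_mul_of_one_le_right (norm_nonneg _) (one_le_pow₀ hp1)
  calc ‖(x : ℚ_[p])‖ = ‖(y : ℚ_[p]) * ξ + -((y : ℚ_[p]) * ξ - x)‖ := by ring_nf
    _ ≤ max ‖(y : ℚ_[p]) * ξ‖ ‖(y : ℚ_[p]) * ξ - x‖ := by
        simpa only [norm_neg] using
          IsUltrametricDist.norm_add_le_max ((y : ℚ_[p]) * ξ) (-((y : ℚ_[p]) * ξ - x))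
    _ ≤ ‖(y : ℚ_[p])‖ * (p : ℝ) ^ k := by
        rw [norm_mul]
        exact max_le (by gcongr)
          (hle.trans ((sqrt_rpow_neg_le_norm_intCast hx hy hm).trans hnorm_y))
    _ = (p : ℝ) ^ (-((padicValInt p y - k : ℕ) : ℤ)) := by
        rw [Padic.norm_intCast_eq_zpow hy, ← zpow_natCast, ← zpow_add₀ (by positivity)]
        congr 1
        omega

lemma sqrt_rpow_neg_div_norm_le (k : ℕ) {m : ℝ} (hm : 2 ≤ m) (a b : ℤ) :
    √|(((p : ℤ) ^ (padicValInt p b - k) * a : ℤ) : ℝ) * b| ^ (-m) / ‖(b : ℚ_[p])‖ ≤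
      (p : ℝ) ^ k * (|(a : ℝ)| ^ (-(m / 2)) * |(b : ℝ)| ^ (-(m / 2))) := by
  have hp1 : (1 : ℝ) ≤ p := by exact_mod_cast hp.out.one_lt.le
  set G := |(a : ℝ)| ^ (-(m / 2)) * |(b : ℝ)| ^ (-(m / 2))
  have hG : 0 ≤ G := by positivity
  rcases eq_or_ne b 0 with rfl | hb
  · simp only [Int.cast_zero, norm_zero, div_zero]; positivity
  set v := padicValInt p b
  set P : ℝ := (p : ℝ) ^ (v - k)
  have hP : 1 ≤ P := one_le_pow₀ hp1
  have hpv : (p : ℝ) ^ v ≤ (p : ℝ) ^ k * P := by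
    rw [← pow_add]; exact pow_le_pow_right₀ hp1 (by omega)
  -- the factor `p ^ (v - k)` of `x` pays for the factor `p ^ v` coming from `‖b‖`
  have hPP : P * P ^ (-(m / 2)) ≤ 1 := by
    nth_rewrite 1 [← Real.rpow_one P]
    rw [← Real.rpow_add (by positivity)]
    exact Real.rpow_le_one_of_one_le_of_nonpos hP (by linarith)
  calc √|(((p : ℤ) ^ (v - k) * a : ℤ) : ℝ) * b| ^ (-m) / ‖(b : ℚ_[p])‖
      = (p : ℝ) ^ v * (P ^ (-(m / 2)) * G) := by
        rw [Real.sqrt_rpow_neg (abs_nonneg _), Padic.norm_intCast_eq_zpow hb, zpow_neg,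
          zpow_natCast, div_inv_eq_mul, mul_comm]
        push_cast
        rw [abs_mul, abs_mul, abs_of_nonneg (by positivity : (0 : ℝ) ≤ P),
          Real.mul_rpow (by positivity) (by positivity),
          Real.mul_rpow (by positivity) (by positivity), mul_assoc]
    _ ≤ (p : ℝ) ^ k * P * (P ^ (-(m / 2)) * G) := by gcongr
    _ = (p : ℝ) ^ k * (P * P ^ (-(m / 2))) * G := by ring
    _ ≤ (p : ℝ) ^ k * G :=
        mul_le_mul_of_nonneg_right (mul_le_of_le_one_right (by positivity) hPP) hG

section Haar

variable [MeasurableSpace ℚ_[p]] [BorelSpace ℚ_[p]] (μ : Measure ℚ_[p]) [μ.IsAddHaarMeasure]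

lemma Padic.measure_closedBall_zpow_le (n : ℕ) :
    μ (closedBall 0 ((p : ℝ) ^ (-(n : ℤ)))) ≤
      ((p : ℝ≥0∞) ^ n)⁻¹ * μ (closedBall 0 1) := by
  have hp1 : (1 : ℝ) ≤ p := by exact_mod_cast hp.out.one_lt.le
  set r : ℝ := (p : ℝ) ^ (-(n : ℤ))
  have hr1 : r ≤ 1 := zpow_le_one_of_nonpos₀ hp1 (by omega)
  have hdisj : (Finset.range (p ^ n) : Set ℕ).PairwiseDisjoint
      fun i => closedBall (i : ℚ_[p]) r := fun a ha b hb hab =>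
    IsUltrametricDist.disjoint_closedBall_of_lt_dist
      (Padic.natCast_lt_dist_natCast (Finset.mem_range.mp ha) (Finset.mem_range.mp hb) hab)
  have hsub : (⋃ i ∈ Finset.range (p ^ n), closedBall (i : ℚ_[p]) r) ⊆ closedBall 0 1 := by
    refine Set.iUnion₂_subset fun i _ => ?_
    have h0 : (0 : ℚ_[p]) ∈ closedBall (i : ℚ_[p]) 1 := by
      simpa using Padic.norm_int_le_one (p := p) i
    exact (closedBall_subset_closedBall hr1).trans
      (IsUltrametricDist.closedBall_eq_of_mem h0).subset
  have hsum : (p : ℝ≥0∞) ^ n * μ (closedBall 0 r) ≤ μ (closedBall 0 1) := by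
    calc (p : ℝ≥0∞) ^ n * μ (closedBall 0 r)
        = ∑ i ∈ Finset.range (p ^ n), μ (closedBall (i : ℚ_[p]) r) := by
          simp [Measure.addHaar_closedBall_center]
      _ = μ (⋃ i ∈ Finset.range (p ^ n), closedBall (i : ℚ_[p]) r) :=
          (measure_biUnion_finset hdisj fun _ _ => measurableSet_closedBall).symm
      _ ≤ μ (closedBall 0 1) := measure_mono hsub
  exact (ENNReal.mul_le_iff_le_inv (by simp [hp.out.ne_zero]) (by simp)).mp hsum

lemma Padic.measure_closedBall_le {r : ℝ} (hr0 : 0 < r) (hr1 : r ≤ 1) (z : ℚ_[p]) :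
    μ (closedBall z r) ≤ ENNReal.ofReal (p * r) * μ (closedBall 0 1) := by
  have hp1 : (1 : ℝ) < p := by exact_mod_cast hp.out.one_lt
  obtain ⟨n, hn, hn'⟩ := exists_nat_pow_near (one_le_inv₀ hr0 |>.mpr hr1) hp1
  have hrn : r ≤ (p : ℝ) ^ (-(n : ℤ)) := by
    rw [zpow_neg, zpow_natCast]; exact (le_inv_comm₀ (by positivity) hr0).mp hn
  have hpr : (p : ℝ) ^ (-(n : ℤ)) ≤ p * r := by
    rw [zpow_neg, zpow_natCast, inv_le_iff_one_le_mul₀' (by positivity), ← mul_assoc,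
      ← pow_succ]
    exact ((inv_lt_iff_one_lt_mul₀ hr0).mp hn').le
  calc μ (closedBall z r) ≤ μ (closedBall 0 ((p : ℝ) ^ (-(n : ℤ)))) := by
        rw [Measure.addHaar_closedBall_center]
        exact measure_mono (closedBall_subset_closedBall hrn)
    _ ≤ ((p : ℝ≥0∞) ^ n)⁻¹ * μ (closedBall 0 1) := Padic.measure_closedBall_zpow_le μ n
    _ = ENNReal.ofReal ((p : ℝ) ^ (-(n : ℤ))) * μ (closedBall 0 1) := by
        rw [zpow_neg, zpow_natCast, ENNReal.ofReal_inv_of_pos (by positivity),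
          ENNReal.ofReal_pow (by positivity), ENNReal.ofReal_natCast]
    _ ≤ ENNReal.ofReal (p * r) * μ (closedBall 0 1) := by gcongr

lemma measure_mulApproxBall_le (k : ℕ) {m : ℝ} (hm : 2 ≤ m) (x y : ℤ) :
    μ (mulApproxBall p k m (x, y)) ≤
      ENNReal.ofReal (p * (√|(x : ℝ) * y| ^ (-m) / ‖(y : ℚ_[p])‖)) *
        μ (closedBall 0 1) := by
  rcases (mulApproxBall p k m (x, y)).eq_empty_or_nonempty with hemp | ⟨ξ, -, hx, hy, -⟩
  · simp [hemp]
  have hy' : (y : ℚ_[p]) ≠ 0 := by exact_mod_cast hy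
  have hr0 : 0 < √|(x : ℝ) * y| ^ (-m) / ‖(y : ℚ_[p])‖ :=
    div_pos (Real.rpow_pos_of_pos (Real.sqrt_pos.mpr
      (one_pos.trans_le (one_le_abs_intCast_mul hx hy))) _) (norm_pos_iff.mpr hy')
  have hr1 := (div_le_one (norm_pos_iff.mpr hy')).mpr (sqrt_rpow_neg_le_norm_intCast hx hy hm)
  refine (measure_mono ?_).trans (Padic.measure_closedBall_le μ hr0 hr1 ((x : ℚ_[p]) / y))
  rintro ξ ⟨-, -, -, -, hle⟩
  rw [mem_closedBall, dist_eq_norm, le_div_iff₀ (norm_pos_iff.mpr hy'), ← norm_mul]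
  calc ‖(ξ - x / y) * y‖ = ‖(y : ℚ_[p]) * ξ - x‖ := by field_simp
    _ ≤ _ := hle

lemma tsum_measure_mulApproxBall_ne_top (k : ℕ) {m : ℝ} (hm : 2 < m) :
    ∑' q, μ (mulApproxBall p k m q) ≠ ∞ := by
  have hpz : (p : ℤ) ≠ 0 := by exact_mod_cast hp.out.ne_zero
  set g : ℤ × ℤ → ℝ := fun u => |(u.1 : ℝ)| ^ (-(m / 2)) * |(u.2 : ℝ)| ^ (-(m / 2))
  have hg : Summable g := by
    have h := Real.summable_abs_int_rpow (b := m / 2) (by linarith)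
    exact h.mul_of_nonneg h (fun _ => by positivity) (fun _ => by positivity)
  -- only pairs with `p ^ (v_p(y) - k) ∣ x` contribute, so reindex by `x = p ^ (v_p(y) - k) * a`
  set i : ℤ × ℤ → ℤ × ℤ := fun u => ((p : ℤ) ^ (padicValInt p u.2 - k) * u.1, u.2)
  have hi : Function.Injective i := by
    rintro ⟨a, b⟩ ⟨a', b'⟩ h
    simp only [i, Prod.mk.injEq] at h
    obtain ⟨h1, rfl⟩ := h
    simp [mul_left_cancel₀ (pow_ne_zero _ hpz) h1]
  have hsupp : Function.support (fun q => μ (mulApproxBall p k m q)) ⊆ Set.range i := by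
    rintro ⟨x, y⟩ hq
    obtain ⟨ξ, hξ⟩ := nonempty_of_measure_ne_zero hq
    obtain ⟨a, rfl⟩ := pow_sub_dvd_of_mem_mulApproxBall hm.le hξ
    exact ⟨(a, y), rfl⟩
  set C := ENNReal.ofReal ((p : ℝ) * (p : ℝ) ^ k) * μ (closedBall 0 1)
  have hC : C ≠ ∞ :=
    ENNReal.mul_ne_top ENNReal.ofReal_ne_top (isCompact_closedBall _ _).measure_lt_top.ne
  have hsum : ∑' u, μ (mulApproxBall p k m (i u)) ≤ C * ENNReal.ofReal (∑' u, g u) := calc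
    ∑' u, μ (mulApproxBall p k m (i u)) ≤ ∑' u, C * ENNReal.ofReal (g u) := by
        refine ENNReal.tsum_le_tsum fun u => (measure_mulApproxBall_le μ k hm.le _ _).trans ?_
        rw [mul_comm C, ← mul_assoc, ← ENNReal.ofReal_mul (by positivity), mul_comm (g u),
          mul_assoc]
        gcongr
        exact sqrt_rpow_neg_div_norm_le k hm.le u.1 u.2
    _ = C * ENNReal.ofReal (∑' u, g u) := by
        rw [ENNReal.tsum_mul_left, ENNReal.ofReal_tsum_of_nonneg (fun _ => by positivity) hg]
  rw [← hi.tsum_eq hsupp]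
  exact ne_top_of_le_ne_top (ENNReal.mul_ne_top hC ENNReal.ofReal_ne_top) hsum

lemma measure_setOf_mulApproxSet_infinite {m : ℝ} (hm : 2 < m) :
    μ {ξ | (mulApproxSet p ξ m).Infinite} = 0 := by
  have hp1 : (1 : ℝ) < p := by exact_mod_cast hp.out.one_lt
  have hsub : {ξ | (mulApproxSet p ξ m).Infinite} ⊆
      ⋃ k : ℕ, limsup (mulApproxBall p k m) cofinite := by
    intro ξ hξ
    obtain ⟨k, hk⟩ := pow_unbounded_of_one_lt ‖ξ‖ hp1
    refine Set.mem_iUnion.mpr ⟨k, ?_⟩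
    rw [cofinite.limsup_set_eq]
    exact hξ.mono fun q hq => ⟨hk.le, hq⟩
  exact measure_mono_null hsub <| measure_iUnion_null fun k =>
    measure_limsup_cofinite_eq_zero (tsum_measure_mulApproxBall_ne_top μ k hm)

lemma measure_setOf_two_lt_muTimesExp : μ {ξ | 2 < muTimesExp p ξ} = 0 := by
  have hsub : {ξ | 2 < muTimesExp p ξ} ⊆
      ⋃ j : ℕ, {ξ | (mulApproxSet p ξ (2 + 1 / (j + 1))).Infinite} := by
    intro ξ (hξ : 2 < muTimesExp p ξ)
    rw [muTimesExp_eq_sSup] at hξ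
    obtain ⟨_, ⟨m, hm, rfl⟩, h2m⟩ := lt_sSup_iff.mp hξ
    have h2m' : 2 < m := by simpa using (ENNReal.lt_ofReal_iff_toReal_lt (by simp)).mp h2m
    obtain ⟨j, hj⟩ := exists_nat_one_div_lt (sub_pos.mpr h2m')
    exact Set.mem_iUnion.mpr ⟨j, hm.mono (mulApproxSet_anti ξ (by linarith))⟩
  exact measure_mono_null hsub <| measure_iUnion_null fun j =>
    measure_setOf_mulApproxSet_infinite μ (lt_add_of_pos_right 2 (by positivity))

end Haar

/-- With respect to any additive Haar measure on `ℚ_p`, almost every `ξ` is irrational and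
satisfies `μ×(ξ) = 2`: the set of `ξ` which are rational or have `μ×(ξ) ≠ 2` is null. -/
theorem statement2 (p : ℕ) [Fact p.Prime] [MeasurableSpace ℚ_[p]] [BorelSpace ℚ_[p]]
    (μ : Measure ℚ_[p]) [μ.IsAddHaarMeasure] :
    μ {ξ : ℚ_[p] | ¬ PadicIrrational p ξ ∨ muTimesExp p ξ ≠ 2} = 0 := by
  have hsub : {ξ : ℚ_[p] | ¬ PadicIrrational p ξ ∨ muTimesExp p ξ ≠ 2} ⊆
      Set.range ((↑) : ℚ → ℚ_[p]) ∪ {ξ | 2 < muTimesExp p ξ} := by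
    intro ξ hξ
    by_cases hirr : PadicIrrational p ξ
    · exact Or.inr (hirr.two_le_muTimesExp.lt_of_ne' (hξ.resolve_left (not_not_intro hirr)))
    · simpa [PadicIrrational] using Or.inl hirr
  exact measure_mono_null hsub <| measure_union_null
    ((Set.countable_range _).measure_zero μ) (measure_setOf_two_lt_muTimesExp μ)
end

section
/- The p-adic number ξ∞ = Σ_{j=1}^∞ p^{j!} (the series converges in ℚ_p) satisfies μ̂×(ξ∞) = 3. In particular, the value 3 belongs to the spectrum of the exponent μ̂×. -/
open Filter MeasureTheory
open scoped ENNReal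

/-!
Write `S_k = ∑_{j<k} p^{(j+1)!}`, so that `|ξ - S_k|_p ≤ p^{-(k+1)!}` and
`p^{k!} ≤ S_k < p^{k!+1}`.

For `m < 3`: given `X` with `p^L ≤ X² ≤ p^{L+1}` and `k! < L ≤ (k+1)!`, the pair
`x = p^t S_k`, `y = p^t` with `2t + k! + 1 ≤ L ≤ 2t + k! + 2` has `|xy| ≤ X²` and
`|yξ - x|_p ≤ p^{-t-(k+1)!}`, which is at most `X^{-m}` once `k` is large.

For `m > 3`: take `X² = p^τ` with `τ = k·k! - 3`, so that `(k+1)! = τ + k! + 3`. A solution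
makes `yS_{k+1} - x` divisible by `p^{⌈τ/2⌉+(k+1)!+2}` and `yS_k - x` divisible by
`p^{(k+1)!}`. A multiple `yS - x` of `p^n` is either `0` or has `|x|` or `|y|S` at least
`p^{n-1}`; at level `k+1` this forces `|y| > p^{⌈τ/2⌉}`, and then every case at level `k`
gives `|xy| > p^τ`.

A nonzero rational `x/y` has `yξ - x = 0` for a fixed pair, so it is approximable to every
exponent; hence `ξ` is irrational.
-/

open Finset Nat

lemma eq_or_pow_le_or_pow_lt_of_pow_dvd {p x y S : ℤ} {n s : ℕ} (hp : 2 ≤ p) (hS₀ : 0 ≤ S)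
    (hS : S ≤ p ^ (s + 1)) (hdvd : p ^ n ∣ y * S - x) :
    x = y * S ∨ p ^ n ≤ p * |x| ∨ p ^ n < |y| * p ^ (s + 2) := by
  by_cases hx : x = y * S
  · exact .inl hx
  refine .inr (or_iff_not_imp_left.mpr fun hpx => ?_)
  have hN : p ^ n ≤ |y| * S + |x| := calc
    p ^ n ≤ |y * S - x| := Int.le_of_dvd (abs_pos.mpr (sub_ne_zero.mpr (Ne.symm hx)))
      ((dvd_abs _ _).mpr hdvd)
    _ ≤ |y * S| + |x| := abs_sub _ _
    _ = |y| * S + |x| := by rw [abs_mul, abs_of_nonneg hS₀]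
  have hyS := mul_le_mul_of_nonneg_left hS (abs_nonneg y)
  have hpn : 0 < p ^ n := pow_pos (by positivity) n
  rw [pow_succ _ (s + 1)]
  nlinarith

section RealPow

lemma rpow_neg_eq_sq_rpow {X : ℝ} (hX : 0 ≤ X) (m : ℝ) : X ^ (-m) = (X ^ 2) ^ (-(m / 2)) := by
  rw [← Real.rpow_natCast, ← Real.rpow_mul hX]
  ring_nf

lemma pow_rpow_neg_half {q : ℝ} (hq : 0 ≤ q) (n : ℕ) (m : ℝ) :
    (q ^ n) ^ (-(m / 2)) = q ^ (-(m * n / 2)) := by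
  rw [← Real.rpow_natCast, ← Real.rpow_mul hq]
  ring_nf

lemma zpow_neg_natCast_eq_rpow (q : ℝ) (e : ℕ) : q ^ (-(e : ℤ)) = q ^ (-(e : ℝ)) := by
  rw [← Real.rpow_intCast]
  push_cast
  rfl

variable {q X m : ℝ} {n e : ℕ}

lemma zpow_neg_le_rpow_neg (hq : 1 ≤ q) (hX : 0 < X) (hm : 0 ≤ m) (hXq : X ^ 2 ≤ q ^ n)
    (hmn : m * n ≤ 2 * e) : q ^ (-(e : ℤ)) ≤ X ^ (-m) := calc
  q ^ (-(e : ℤ)) ≤ q ^ (-(m * n / 2)) := by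
    rw [zpow_neg_natCast_eq_rpow]
    exact Real.rpow_le_rpow_of_exponent_le hq (by linarith)
  _ = (q ^ n) ^ (-(m / 2)) := (pow_rpow_neg_half (by linarith) n m).symm
  _ ≤ X ^ (-m) := by
    rw [rpow_neg_eq_sq_rpow hX.le]
    exact Real.rpow_le_rpow_of_nonpos (by positivity) hXq (by linarith)

lemma rpow_neg_le_zpow_neg (hq : 1 ≤ q) (hX : 0 ≤ X) (hm : 0 ≤ m) (hXq : q ^ n ≤ X ^ 2)
    (hmn : 2 * e ≤ m * n) : X ^ (-m) ≤ q ^ (-(e : ℤ)) := calc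
  X ^ (-m) ≤ (q ^ n) ^ (-(m / 2)) := by
    rw [rpow_neg_eq_sq_rpow hX]
    exact Real.rpow_le_rpow_of_nonpos (pow_pos (by linarith) n) hXq (by linarith)
  _ = q ^ (-(m * n / 2)) := pow_rpow_neg_half (by linarith) n m
  _ ≤ q ^ (-(e : ℤ)) := by
    rw [zpow_neg_natCast_eq_rpow]
    exact Real.rpow_le_rpow_of_exponent_le hq (by linarith)

end RealPow

open Topology in
lemma sSup_image_ofReal_eq {A : Set ℝ} {a r : ℝ} (har : a < r) (hlow : Set.Ico a r ⊆ A)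
    (hup : ∀ m ∈ A, m ≤ r) : sSup (ENNReal.ofReal '' A) = ENNReal.ofReal r := by
  refine le_antisymm
    (sSup_le (Set.forall_mem_image.mpr fun m hm => ENNReal.ofReal_le_ofReal (hup m hm))) ?_
  have hlim : Tendsto ENNReal.ofReal (𝓝[<] r) (𝓝 (ENNReal.ofReal r)) :=
    ENNReal.continuous_ofReal.continuousAt.tendsto.mono_left nhdsWithin_le_nhds
  exact le_of_tendsto hlim (eventually_of_mem (Ico_mem_nhdsLT har)
    fun m hm => le_sSup (Set.mem_image_of_mem _ (hlow hm)))

lemma exists_exponents_of_factorial_lt {K L : ℕ} (hL : K ! < L) :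
    ∃ k t : ℕ, K ≤ k ∧ 2 * t + k ! + 1 ≤ L ∧ L ≤ 2 * t + k ! + 2 ∧ L ≤ (k + 1)! := by
  have hKL : K ≤ L := (self_le_factorial K).trans hL.le
  set k := Nat.findGreatest (fun k => k ! < L) L
  have hk : k ! < L := Nat.findGreatest_spec (P := fun k => k ! < L) hKL hL
  have hk₁ : L ≤ (k + 1)! := by
    by_contra! h
    exact Nat.findGreatest_is_greatest (lt_add_one k) ((self_le_factorial _).trans h.le) h
  exact ⟨k, (L - (k !) - 1) / 2, Nat.le_findGreatest hKL hL, by omega, by omega, hk₁⟩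

noncomputable def padicLiouville (p : ℕ) [Fact p.Prime] : ℚ_[p] :=
  ∑' j : ℕ, (p : ℚ_[p]) ^ (j + 1)!

def padicLiouvilleTrunc (p k : ℕ) : ℕ :=
  ∑ j ∈ range k, p ^ (j + 1)!

def UniformMulApproximable (p : ℕ) [Fact p.Prime] (ξ : ℚ_[p]) (m : ℝ) : Prop :=
  ∀ᶠ X : ℝ in atTop, ∃ x y : ℤ,
    0 < Real.sqrt |(x : ℝ) * (y : ℝ)| ∧ Real.sqrt |(x : ℝ) * (y : ℝ)| ≤ X ∧
    ‖(y : ℚ_[p]) * ξ - (x : ℚ_[p])‖ ≤ X ^ (-m)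

lemma padicLiouvilleTrunc_lt_pow {p : ℕ} (hp : 2 ≤ p) (k : ℕ) :
    padicLiouvilleTrunc p k < p ^ (k ! + 1) := by
  have hmono : StrictMono fun j => (j + 1)! :=
    strictMono_nat_of_lt_succ fun j => (Nat.factorial_lt (succ_pos j)).mpr (lt_add_one _)
  rw [padicLiouvilleTrunc, ← sum_image hmono.injective.injOn]
  refine Nat.geomSum_lt hp fun i hi => ?_
  obtain ⟨j, hj, rfl⟩ := mem_image.mp hi
  exact Nat.lt_add_one_iff.mpr (Nat.factorial_le (mem_range.mp hj))

lemma pow_factorial_le_padicLiouvilleTrunc {p k : ℕ} (hk : 1 ≤ k) :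
    p ^ k ! ≤ padicLiouvilleTrunc p k := by
  obtain ⟨j, rfl⟩ := Nat.exists_eq_add_of_le' hk
  exact single_le_sum (f := fun j => p ^ (j + 1)!) (fun _ _ => Nat.zero_le _)
    (self_mem_range_succ j)

lemma pow_le_abs_mul_abs_of_pow_dvd {p : ℕ} (hp : 2 ≤ p) {x y : ℤ} (hx : x ≠ 0) (hy : y ≠ 0)
    {k t g : ℕ} (hk : 1 ≤ k) (ht : t + k ! + 2 ≤ (k + 1)!) (hg : t ≤ k ! + 2 * g)
    (h₁ : (p : ℤ) ^ (g + (k + 1)! + 2) ∣ y * padicLiouvilleTrunc p (k + 1) - x)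
    (h₀ : (p : ℤ) ^ (k + 1)! ∣ y * padicLiouvilleTrunc p k - x) :
    (p : ℤ) ^ t ≤ |x| * |y| := by
  have hP : (2 : ℤ) ≤ p := mod_cast hp
  have hP1 : (1 : ℤ) ≤ p := by omega
  have hPpos : ∀ n : ℕ, (0 : ℤ) < (p : ℤ) ^ n := fun n => pow_pos (by omega) n
  have hx_le : |x| ≤ |x| * |y| := le_mul_of_one_le_right (abs_nonneg x) (Int.one_le_abs hy)
  have hy_le : |y| ≤ |x| * |y| := le_mul_of_one_le_left (abs_nonneg y) (Int.one_le_abs hx)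
  have htrunc_lo : ∀ j, 1 ≤ j → (p : ℤ) ^ j ! ≤ padicLiouvilleTrunc p j := fun j hj =>
    mod_cast pow_factorial_le_padicLiouvilleTrunc hj
  have htrunc_hi : ∀ j, (padicLiouvilleTrunc p j : ℤ) ≤ (p : ℤ) ^ (j ! + 1) := fun j =>
    mod_cast (padicLiouvilleTrunc_lt_pow hp j).le
  have hsq : ∀ S : ℤ, x = y * S → 0 ≤ S → S * (|y| * |y|) ≤ |x| * |y| := fun S h hS => by
    rw [h, abs_mul, abs_of_nonneg hS]; nlinarith [abs_nonneg y]
  have hpow_x : ∀ n, t + 1 ≤ n → (p : ℤ) ^ n ≤ p * |x| → (p : ℤ) ^ t ≤ |x| := fun n hn h => by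
    have := (pow_le_pow_right₀ hP1 hn).trans h
    rw [pow_succ, mul_comm] at this
    exact le_of_mul_le_mul_left this (by omega)
  by_contra! hsmall
  have hy_big : (p : ℤ) ^ g < |y| := by
    rcases eq_or_pow_le_or_pow_lt_of_pow_dvd hP (Nat.cast_nonneg _) (htrunc_hi (k + 1)) h₁
      with h | h | h
    · have := hsq _ h (Nat.cast_nonneg _)
      have := htrunc_lo (k + 1) (by omega)
      have := pow_le_pow_right₀ hP1 (show t ≤ (k + 1)! by omega)
      nlinarith [Int.one_le_abs hy]
    · linarith [hpow_x _ (by omega) h]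
    · rw [add_assoc, pow_add] at h
      exact lt_of_mul_lt_mul_right h (hPpos _).le
  rcases eq_or_pow_le_or_pow_lt_of_pow_dvd hP (Nat.cast_nonneg _) (htrunc_hi k) h₀
    with h | h | h
  · have hy2 : (p : ℤ) ^ (2 * g) ≤ |y| * |y| := by
      rw [mul_comm, pow_mul]
      exact pow_le_pow_left₀ (hPpos g).le hy_big.le 2 |>.trans_eq (sq _)
    have := calc (p : ℤ) ^ t ≤ (p : ℤ) ^ (k ! + 2 * g) := pow_le_pow_right₀ hP1 hg
      _ = (p : ℤ) ^ k ! * (p : ℤ) ^ (2 * g) := pow_add _ _ _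
      _ ≤ padicLiouvilleTrunc p k * (|y| * |y|) :=
        mul_le_mul (htrunc_lo k hk) hy2 (hPpos _).le (Nat.cast_nonneg _)
      _ ≤ |x| * |y| := hsq _ h (Nat.cast_nonneg _)
    omega
  · linarith [hpow_x _ (by omega) h]
  · have := pow_le_pow_right₀ hP1 (show t + (k ! + 2) ≤ (k + 1)! by omega)
    rw [pow_add] at this
    linarith [lt_of_mul_lt_mul_right (this.trans_lt h) (hPpos _).le]

section Padic

variable {p : ℕ} [hp : Fact p.Prime]

lemma summable_padicLiouville : Summable fun j : ℕ => (p : ℚ_[p]) ^ (j + 1)! := by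
  have hnorm : ‖(p : ℚ_[p])‖ < 1 := Padic.norm_p_lt_one
  refine .of_norm_bounded (summable_geometric_of_lt_one (norm_nonneg _) hnorm) fun j => ?_
  rw [norm_pow]
  exact pow_le_pow_of_le_one (norm_nonneg _) hnorm.le
    ((Nat.le_succ j).trans (self_le_factorial _))

lemma norm_padicLiouville_sub_trunc_le (k : ℕ) :
    ‖padicLiouville p - padicLiouvilleTrunc p k‖ ≤ (p : ℝ) ^ (-(k + 1)! : ℤ) := by
  have htail : padicLiouville p - padicLiouvilleTrunc p k =
      ∑' j : ℕ, (p : ℚ_[p]) ^ (j + k + 1)! := by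
    rw [padicLiouville, ← summable_padicLiouville.sum_add_tsum_nat_add k, padicLiouvilleTrunc]
    push_cast
    exact add_sub_cancel_left _ _
  rw [htail]
  refine IsUltrametricDist.norm_tsum_le_of_forall_le fun j => ?_
  rw [Padic.norm_p_pow]
  exact zpow_le_zpow_right₀ (mod_cast hp.out.one_le)
    (neg_le_neg (mod_cast factorial_le (by omega)))

lemma pow_dvd_mul_trunc_sub_of_norm_le {x y : ℤ} {k n : ℕ} (hn : n ≤ (k + 1)!)
    (h : ‖(y : ℚ_[p]) * padicLiouville p - x‖ ≤ (p : ℝ) ^ (-n : ℤ)) :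
    (p : ℤ) ^ n ∣ y * padicLiouvilleTrunc p k - x := by
  have htail : ‖(y : ℚ_[p]) * (padicLiouvilleTrunc p k - padicLiouville p)‖ ≤
      (p : ℝ) ^ (-n : ℤ) := by
    rw [norm_mul, norm_sub_rev]
    refine (mul_le_of_le_one_left (norm_nonneg _) (Padic.norm_int_le_one y)).trans ?_
    exact (norm_padicLiouville_sub_trunc_le k).trans
      (zpow_le_zpow_right₀ (mod_cast hp.out.one_le) (neg_le_neg (mod_cast hn)))
  rw [← Padic.norm_int_le_pow_iff_dvd]
  have hsplit : ((y * padicLiouvilleTrunc p k - x : ℤ) : ℚ_[p]) =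
      ((y : ℚ_[p]) * padicLiouville p - x) + y * (padicLiouvilleTrunc p k - padicLiouville p) := by
    push_cast; ring
  rw [hsplit]
  exact (IsUltrametricDist.norm_add_le_max _ _).trans (max_le h htail)

lemma lt_norm_mul_padicLiouville_sub {m : ℝ} (hm : 3 < m) {k : ℕ} (hk : 3 ≤ k)
    (hmk : 3 * m + 4 ≤ (m - 3) * k) {x y : ℤ} (hx : x ≠ 0) (hy : y ≠ 0)
    (hxy : |(x : ℝ) * y| ≤ (p : ℝ) ^ (k * (k !) - 3)) :
    √((p : ℝ) ^ (k * (k !) - 3)) ^ (-m) < ‖(y : ℚ_[p]) * padicLiouville p - x‖ := by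
  by_contra! herr
  set a := (k !)
  set τ := k * a - 3
  have ha1 : 1 ≤ a := k.factorial_pos
  have hτa : τ + 3 = k * a := Nat.sub_add_cancel (by nlinarith)
  have hb : (k + 1)! = τ + a + 3 := by rw [factorial_succ]; linarith
  set g := (τ + 1) / 2
  have hexp : 2 * (g + (k + 1)! + 2 : ℕ) ≤ m * τ := by
    have h2g : (2 * g : ℝ) ≤ τ + 1 := by exact_mod_cast Nat.mul_div_le (τ + 1) 2
    have hτa' : (τ : ℝ) + 3 = k * a := by exact_mod_cast hτa
    have ha1' : (1 : ℝ) ≤ a := by exact_mod_cast ha1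
    rw [hb]
    push_cast
    nlinarith [mul_le_mul_of_nonneg_right hmk (by linarith : (0 : ℝ) ≤ a),
      mul_nonneg (by linarith : (0 : ℝ) ≤ 3 * m + 2) (by linarith : (0 : ℝ) ≤ a - 1)]
  have herr' := herr.trans (rpow_neg_le_zpow_neg (mod_cast hp.out.one_le) (Real.sqrt_nonneg _)
    (by linarith) (Real.sq_sqrt (by positivity)).ge hexp)
  have he : g + (k + 1)! + 2 ≤ (k + 1 + 1)! := by
    rw [factorial_succ (k + 1)]
    nlinarith [show g + 2 ≤ (k + 1)! by omega]
  have h₁ := pow_dvd_mul_trunc_sub_of_norm_le he herr'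
  have h₀ := pow_dvd_mul_trunc_sub_of_norm_le (k := k) le_rfl (herr'.trans
    (zpow_le_zpow_right₀ (mod_cast hp.out.one_le) (neg_le_neg (mod_cast (by omega)))))
  have hxy' : |x| * |y| ≤ (p : ℤ) ^ τ := by rw [← abs_mul]; exact_mod_cast hxy
  have := pow_le_abs_mul_abs_of_pow_dvd hp.out.two_le hx hy (t := τ + 1) (by omega) (by omega)
    (by omega) h₁ h₀
  rw [pow_succ] at this
  nlinarith [pow_pos (show (0 : ℤ) < p by exact_mod_cast hp.out.pos) τ,
    (show (2 : ℤ) ≤ p by exact_mod_cast hp.out.two_le)]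

theorem not_uniformMulApproximable_padicLiouville {m : ℝ} (hm : 3 < m) :
    ¬ UniformMulApproximable p (padicLiouville p) m := by
  intro hA
  obtain ⟨K, hK⟩ := exists_nat_ge ((3 * m + 4) / (m - 3))
  have hτ : Tendsto (fun k : ℕ => k * (k !) - 3) atTop atTop :=
    tendsto_atTop_mono (fun k => Nat.sub_le_sub_right (Nat.le_mul_of_pos_right k k.factorial_pos) 3)
      (tendsto_sub_atTop_nat 3)
  have hX : Tendsto (fun k : ℕ => √((p : ℝ) ^ (k * (k !) - 3))) atTop atTop :=
    Real.tendsto_sqrt_atTop.comp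
      ((tendsto_pow_atTop_atTop_of_one_lt (mod_cast hp.out.one_lt)).comp hτ)
  obtain ⟨k, ⟨x, y, hpos, hle, herr⟩, hKk, hk⟩ :=
    ((hX.eventually hA).and ((eventually_ge_atTop K).and (eventually_ge_atTop 3))).exists
  have hx : x ≠ 0 := by rintro rfl; simp at hpos
  have hy : y ≠ 0 := by rintro rfl; simp at hpos
  have hmk : 3 * m + 4 ≤ (m - 3) * k :=
    (div_le_iff₀ (by linarith)).mp hK |>.trans_eq (mul_comm _ _) |>.trans
      (mul_le_mul_of_nonneg_left (mod_cast hKk) (by linarith))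
  exact (lt_norm_mul_padicLiouville_sub hm hk hmk hx hy
    ((Real.sqrt_le_sqrt_iff (by positivity)).mp hle)).not_ge herr

lemma norm_pow_mul_padicLiouville_sub_le (t k : ℕ) :
    ‖(((p ^ t : ℕ) : ℤ) : ℚ_[p]) * padicLiouville p
      - (((p ^ t * padicLiouvilleTrunc p k : ℕ) : ℤ) : ℚ_[p])‖ ≤
      (p : ℝ) ^ (-(t + (k + 1)! : ℕ) : ℤ) := by
  have hdiff : (((p ^ t : ℕ) : ℤ) : ℚ_[p]) * padicLiouville p
      - (((p ^ t * padicLiouvilleTrunc p k : ℕ) : ℤ) : ℚ_[p]) =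
      (p : ℚ_[p]) ^ t * (padicLiouville p - padicLiouvilleTrunc p k) := by
    push_cast
    ring
  rw [hdiff, norm_mul, Padic.norm_p_pow, Nat.cast_add, neg_add, zpow_add₀ (mod_cast hp.out.ne_zero)]
  exact mul_le_mul_of_nonneg_left (norm_padicLiouville_sub_trunc_le k) (by positivity)

lemma exists_approx_padicLiouville {m X : ℝ} {k t L : ℕ} (hm : 1 ≤ m)
    (hmk : 2 * m + 2 ≤ (3 - m) * (k + 1)) (hk : 1 ≤ k) (hL₁ : 2 * t + k ! + 1 ≤ L)
    (hL₂ : L ≤ 2 * t + k ! + 2) (hL₃ : L ≤ (k + 1)!) (hXL : (p : ℝ) ^ L ≤ X ^ 2)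
    (hXL' : X ^ 2 ≤ (p : ℝ) ^ (L + 1)) (hX : 0 < X) :
    ∃ x y : ℤ, 0 < √|(x : ℝ) * (y : ℝ)| ∧ √|(x : ℝ) * (y : ℝ)| ≤ X ∧
      ‖(y : ℚ_[p]) * padicLiouville p - (x : ℚ_[p])‖ ≤ X ^ (-m) := by
  set a := (k !)
  have hprod : p ^ t * padicLiouvilleTrunc p k * p ^ t ≤ p ^ L := calc
    p ^ t * padicLiouvilleTrunc p k * p ^ t ≤ p ^ t * p ^ (a + 1) * p ^ t := by
      gcongr; exact (padicLiouvilleTrunc_lt_pow hp.out.two_le k).le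
    _ = p ^ (2 * t + a + 1) := by ring
    _ ≤ p ^ L := Nat.pow_le_pow_right hp.out.pos hL₁
  have hexp : m * (L + 1 : ℕ) ≤ 2 * (t + (k + 1)! : ℕ) := by
    have hL₁' : (2 * t + a + 1 : ℝ) ≤ L := by exact_mod_cast hL₁
    have hL₂' : (L : ℝ) ≤ 2 * t + a + 2 := by exact_mod_cast hL₂
    have hL₃' : (L : ℝ) ≤ (k + 1) * a := by exact_mod_cast hL₃.trans_eq (factorial_succ k)
    have ha1 : (1 : ℝ) ≤ a := by exact_mod_cast k.factorial_pos
    rw [factorial_succ]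
    push_cast
    nlinarith [mul_le_mul_of_nonneg_right hmk (by linarith : (0 : ℝ) ≤ a),
      mul_nonneg (by linarith : (0 : ℝ) ≤ 2 * m + 1) (by linarith : (0 : ℝ) ≤ a - 1),
      mul_le_mul_of_nonneg_right (by linarith : (2 * t : ℝ) ≤ (k + 1) * a - a - 1)
        (by linarith : (0 : ℝ) ≤ m - 1)]
  refine ⟨(p ^ t * padicLiouvilleTrunc p k : ℕ), (p ^ t : ℕ), ?_⟩
  have hxy : |(((p ^ t * padicLiouvilleTrunc p k : ℕ) : ℤ) : ℝ) * (((p ^ t : ℕ) : ℤ) : ℝ)| =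
      ((p ^ t * padicLiouvilleTrunc p k * p ^ t : ℕ) : ℝ) := by
    push_cast
    exact abs_of_nonneg (by positivity)
  rw [hxy]
  refine ⟨Real.sqrt_pos.mpr (mod_cast ?_), Real.sqrt_le_iff.mpr ⟨hX.le,
    (mod_cast hprod : ((_ : ℕ) : ℝ) ≤ (p : ℝ) ^ L).trans hXL⟩,
    (norm_pow_mul_padicLiouville_sub_le t k).trans
      (zpow_neg_le_rpow_neg (mod_cast hp.out.one_le) hX (by linarith) hXL' hexp)⟩
  have hp0 := hp.out.pos
  exact Nat.mul_pos (Nat.mul_pos (pow_pos hp0 t) ((pow_pos hp0 _).trans_le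
    (pow_factorial_le_padicLiouvilleTrunc hk))) (pow_pos hp0 t)

theorem uniformMulApproximable_padicLiouville {m : ℝ} (hm1 : 1 ≤ m) (hm : m < 3) :
    UniformMulApproximable p (padicLiouville p) m := by
  have hp1 : (1 : ℝ) < p := mod_cast hp.out.one_lt
  obtain ⟨K, hK⟩ := exists_nat_ge ((2 * m + 2) / (3 - m))
  filter_upwards [eventually_ge_atTop ((p : ℝ) ^ ((K + 1)! + 1))] with X hX
  have hX1 : 1 ≤ X := (one_le_pow₀ hp1.le).trans hX
  set M := ⌊X ^ 2⌋₊
  have hM : p ^ ((K + 1)! + 1) ≤ M := Nat.le_floor (by push_cast; nlinarith)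
  obtain ⟨k, t, hKk, hL₁, hL₂, hL₃⟩ :=
    exists_exponents_of_factorial_lt (Nat.le_log_of_pow_le hp.out.one_lt hM)
  have hmk : 2 * m + 2 ≤ (3 - m) * (k + 1) :=
    (div_le_iff₀ (by linarith)).mp hK |>.trans_eq (mul_comm _ _) |>.trans
      (mul_le_mul_of_nonneg_left (by exact_mod_cast (by omega : K ≤ k + 1)) (by linarith))
  have hLM : (p : ℝ) ^ Nat.log p M ≤ M :=
    mod_cast Nat.pow_log_le_self p ((pow_pos hp.out.pos _).trans_le hM).ne'
  exact exists_approx_padicLiouville hm1 hmk (by omega) hL₁ hL₂ hL₃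
    (hLM.trans (Nat.floor_le (sq_nonneg X)))
    ((Nat.lt_floor_add_one _).le.trans (mod_cast Nat.lt_pow_succ_log_self hp.out.one_lt M))
    (by linarith)

lemma uniformMulApproximable_ratCast {r : ℚ} (hr : r ≠ 0) (m : ℝ) :
    UniformMulApproximable p r m := by
  filter_upwards [eventually_ge_atTop √|(r.num : ℝ) * (r.den : ℤ)|] with X hX
  refine ⟨r.num, r.den, Real.sqrt_pos.mpr (abs_pos.mpr (mul_ne_zero
    (mod_cast Rat.num_ne_zero.mpr hr) (mod_cast r.den_nz))), hX, ?_⟩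
  have hr : ((r.den : ℤ) : ℚ_[p]) * r - (r.num : ℚ_[p]) = 0 := by
    rw [sub_eq_zero]
    exact_mod_cast (mul_comm (r.den : ℚ) r).trans (Rat.mul_den_eq_num r)
  rw [hr, norm_zero]
  exact Real.rpow_nonneg ((Real.sqrt_nonneg _).trans hX) _

lemma padicLiouville_ne_zero : padicLiouville p ≠ 0 := by
  intro h
  have := pow_dvd_mul_trunc_sub_of_norm_le (x := 0) (y := 1) (k := 1) (n := 2) le_rfl
    (by rw [h]; simp)
  simp only [padicLiouvilleTrunc, range_one, sum_singleton, zero_add, factorial_one, pow_one,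
    one_mul, sub_zero] at this
  have hp2 : (2 : ℤ) ≤ p := mod_cast hp.out.two_le
  nlinarith [Int.le_of_dvd (by omega) this]

theorem padicIrrational_padicLiouville : PadicIrrational p (padicLiouville p) := by
  intro r hr
  rcases eq_or_ne r 0 with rfl | h0
  · exact padicLiouville_ne_zero (by simpa using hr.symm)
  · exact not_uniformMulApproximable_padicLiouville (m := 4) (by norm_num)
      (hr ▸ uniformMulApproximable_ratCast h0 4)

theorem muHatTimesExp_padicLiouville : muHatTimesExp p (padicLiouville p) = 3 := by
  have := sSup_image_ofReal_eq (A := {m | UniformMulApproximable p (padicLiouville p) m})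
    (by norm_num) (fun m hm => uniformMulApproximable_padicLiouville hm.1 hm.2)
    (fun m hm => not_lt.mp fun h => not_uniformMulApproximable_padicLiouville h hm)
  rwa [ENNReal.ofReal_ofNat] at this

end Padic

/-- The `p`-adic Liouville number `ξ∞ = Σ_{j≥1} p^(j!)` satisfies `μ̂×(ξ∞) = 3`.
In particular `3` belongs to the spectrum of `μ̂×`. -/
theorem statement5 (p : ℕ) [Fact p.Prime] :
    muHatTimesExp p (∑' j : ℕ, (p : ℚ_[p]) ^ Nat.factorial (j + 1)) = 3 ∧
    (3 : ℝ≥0∞) ∈ {v : ℝ≥0∞ | ∃ ξ : ℚ_[p], PadicIrrational p ξ ∧ muHatTimesExp p ξ = v} :=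
  ⟨muHatTimesExp_padicLiouville, padicLiouville p, padicIrrational_padicLiouville,
    muHatTimesExp_padicLiouville⟩
end

section
/- Every irrational p-adic number ξ satisfies μ̂×(ξ) ≤ (5 + √5)/2. -/
open Filter MeasureTheory
open scoped ENNReal

/-!
Suppose `m > (5 + √5)/2` lies in the set defining `μ̂×(ξ)` and put `M = m - 1 > (3 + √5)/2`, the
larger root of `M² - 3M + 1`. For `v = (v₁, v₂)` write `h(v) = log √|v₁v₂|`, `s(v) = log √|v₁/v₂|`
and `q(v) = log |v₂ξ - v₁|_p + h(v)`. Dividing out the gcd only lowers `h` and `q`, so at every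
large log-scale `L` some primitive `v` has `h(v) ≤ L` and `q(v) ≤ -ML`. Restarting at the scale
where the previous vector stops being good gives three such vectors with strictly decreasing `q`,
hence pairwise independent. For two of them the determinant `d` is a nonzero integer with `|d|_p` at
most the larger p-adic error and `|d| ≤ 2 exp (h(v) + h(w) + |s(v) - s(w)|)`; as `|d|_p |d| ≥ 1`,
each pair gives `ML ≤ O(1) + max h + |Δs|`. These three inequalities force the skews of consecutive
vectors to have opposite signs, and then `M² - 3M + 1 > 0` rules out the pair formed by the first
and the last vector once `L` is large.
-/

theorem Padic.one_le_norm_intCast_mul_abs {p : ℕ} [Fact p.Prime] {z : ℤ} (hz : z ≠ 0) :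
    1 ≤ ‖(z : ℚ_[p])‖ * |(z : ℝ)| := by
  have hp : (0 : ℝ) < p := by exact_mod_cast (Fact.out : p.Prime).pos
  rw [Padic.norm_eq_zpow_neg_valuation (by exact_mod_cast hz), Padic.valuation_intCast,
    zpow_neg, zpow_natCast, one_le_inv_mul₀ (by positivity)]
  have hdvd : (p : ℤ) ^ padicValInt p z ∣ |z| := (dvd_abs _ _).mpr (padicValInt_dvd z)
  exact_mod_cast Int.le_of_dvd (abs_pos.mpr hz) hdvd

theorem abs_sub_eq_abs_abs_sub_abs_of_mul_nonneg {α : Type*} [Ring α] [LinearOrder α]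
    [IsStrictOrderedRing α] {a b : α} (h : 0 ≤ a * b) : |a - b| = |(|a| - |b|)| := by
  rcases mul_nonneg_iff.mp h with ⟨ha, hb⟩ | ⟨ha, hb⟩
  · rw [abs_of_nonneg ha, abs_of_nonneg hb]
  · rw [abs_of_nonpos ha, abs_of_nonpos hb, ← abs_neg, neg_sub, neg_sub_neg]

section Vectors

variable {p : ℕ} [Fact p.Prime]

variable (p) in
noncomputable def padicErr (ξ : ℚ_[p]) (v : ℤ × ℤ) : ℝ := ‖(v.2 : ℚ_[p]) * ξ - v.1‖

noncomputable def logHeight (v : ℤ × ℤ) : ℝ := (Real.log |(v.1 : ℝ)| + Real.log |(v.2 : ℝ)|) / 2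

noncomputable def logSkew (v : ℤ × ℤ) : ℝ := (Real.log |(v.1 : ℝ)| - Real.log |(v.2 : ℝ)|) / 2

variable (p) in
noncomputable def logQuality (ξ : ℚ_[p]) (v : ℤ × ℤ) : ℝ :=
  Real.log (padicErr p ξ v) + logHeight v

theorem padicErr_pos {ξ : ℚ_[p]} (hξ : PadicIrrational p ξ) {v : ℤ × ℤ} (hv : v.2 ≠ 0) :
    0 < padicErr p ξ v := by
  refine norm_pos_iff.mpr fun h => hξ ((v.1 : ℚ) / v.2) ?_
  have hv' : (v.2 : ℚ_[p]) ≠ 0 := by exact_mod_cast hv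
  push_cast
  field_simp
  linear_combination -h

theorem logQuality_neg (ξ : ℚ_[p]) (v : ℤ × ℤ) : logQuality p ξ (-v) = logQuality p ξ v := by
  have : ((-v).2 : ℚ_[p]) * ξ - ((-v).1 : ℚ_[p]) = -((v.2 : ℚ_[p]) * ξ - v.1) := by
    push_cast [Prod.fst_neg, Prod.snd_neg]
    ring
  rw [logQuality, padicErr, this, norm_neg]
  simp only [logQuality, padicErr, logHeight, Prod.fst_neg, Prod.snd_neg, Int.cast_neg, abs_neg]

theorem logQuality_smul (ξ : ℚ_[p]) {g : ℤ} (hg : g ≠ 0) {v : ℤ × ℤ} (hv1 : v.1 ≠ 0)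
    (hv2 : v.2 ≠ 0) (hv : padicErr p ξ v ≠ 0) :
    logQuality p ξ (g • v) = Real.log (‖(g : ℚ_[p])‖ * |(g : ℝ)|) + logQuality p ξ v := by
  have hg' : (g : ℝ) ≠ 0 := by exact_mod_cast hg
  have hgp : ‖(g : ℚ_[p])‖ ≠ 0 := norm_ne_zero_iff.mpr (by exact_mod_cast hg)
  have herr : padicErr p ξ (g • v) = ‖(g : ℚ_[p])‖ * padicErr p ξ v := by
    simp only [padicErr, Prod.smul_fst, Prod.smul_snd, smul_eq_mul, ← norm_mul]
    push_cast
    ring_nf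
  simp only [logQuality, logHeight, herr, Prod.smul_fst, Prod.smul_snd, smul_eq_mul,
    Int.cast_mul, abs_mul]
  rw [Real.log_mul hgp hv,
    Real.log_mul (abs_ne_zero.mpr hg') (abs_ne_zero.mpr (by exact_mod_cast hv1)),
    Real.log_mul (abs_ne_zero.mpr hg') (abs_ne_zero.mpr (by exact_mod_cast hv2)),
    Real.log_mul hgp (abs_ne_zero.mpr hg')]
  ring

theorem abs_logSkew_le_logHeight (v : ℤ × ℤ) : |logSkew v| ≤ logHeight v := by
  have h1 : 0 ≤ Real.log |(v.1 : ℝ)| := Real.log_abs (v.1 : ℝ) ▸ Real.log_intCast_nonneg _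
  have h2 : 0 ≤ Real.log |(v.2 : ℝ)| := Real.log_abs (v.2 : ℝ) ▸ Real.log_intCast_nonneg _
  rw [logSkew, logHeight, abs_le]
  constructor <;> linarith

theorem abs_fst_eq_exp_logHeight_add_logSkew {v : ℤ × ℤ} (hv : v.1 ≠ 0) :
    |(v.1 : ℝ)| = Real.exp (logHeight v + logSkew v) := by
  rw [logHeight, logSkew, show ∀ a b : ℝ, (a + b) / 2 + (a - b) / 2 = a by intros; ring,
    Real.exp_log (abs_pos.mpr (by exact_mod_cast hv))]

theorem abs_snd_eq_exp_logHeight_sub_logSkew {v : ℤ × ℤ} (hv : v.2 ≠ 0) :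
    |(v.2 : ℝ)| = Real.exp (logHeight v - logSkew v) := by
  rw [logHeight, logSkew, show ∀ a b : ℝ, (a + b) / 2 - (a - b) / 2 = b by intros; ring,
    Real.exp_log (abs_pos.mpr (by exact_mod_cast hv))]

theorem abs_det_le {v w : ℤ × ℤ} (hv1 : v.1 ≠ 0) (hv2 : v.2 ≠ 0) (hw1 : w.1 ≠ 0) (hw2 : w.2 ≠ 0) :
    |((v.1 * w.2 - w.1 * v.2 : ℤ) : ℝ)| ≤
      2 * Real.exp (logHeight v + logHeight w + |logSkew v - logSkew w|) := by
  have h₁ : |(v.1 : ℝ)| * |(w.2 : ℝ)| ≤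
      Real.exp (logHeight v + logHeight w + |logSkew v - logSkew w|) := by
    rw [abs_fst_eq_exp_logHeight_add_logSkew hv1, abs_snd_eq_exp_logHeight_sub_logSkew hw2,
      ← Real.exp_add]
    exact Real.exp_le_exp.mpr (by linarith [le_abs_self (logSkew v - logSkew w)])
  have h₂ : |(w.1 : ℝ)| * |(v.2 : ℝ)| ≤
      Real.exp (logHeight v + logHeight w + |logSkew v - logSkew w|) := by
    rw [abs_fst_eq_exp_logHeight_add_logSkew hw1, abs_snd_eq_exp_logHeight_sub_logSkew hv2,
      ← Real.exp_add]
    exact Real.exp_le_exp.mpr (by linarith [neg_abs_le (logSkew v - logSkew w)])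
  push_cast
  calc |(v.1 : ℝ) * w.2 - w.1 * v.2| ≤ |(v.1 : ℝ)| * |(w.2 : ℝ)| + |(w.1 : ℝ)| * |(v.2 : ℝ)| := by
        rw [← abs_mul, ← abs_mul]
        exact abs_sub _ _
    _ ≤ _ := by linarith

theorem one_le_max_padicErr_mul_abs_det (ξ : ℚ_[p]) {v w : ℤ × ℤ}
    (hd : v.1 * w.2 - w.1 * v.2 ≠ 0) :
    1 ≤ max (padicErr p ξ v) (padicErr p ξ w) * |((v.1 * w.2 - w.1 * v.2 : ℤ) : ℝ)| := by
  have hnorm : ‖((v.1 * w.2 - w.1 * v.2 : ℤ) : ℚ_[p])‖ ≤ max (padicErr p ξ v) (padicErr p ξ w) := by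
    have hid : ((v.1 * w.2 - w.1 * v.2 : ℤ) : ℚ_[p]) =
        (v.2 : ℚ_[p]) * ((w.2 : ℚ_[p]) * ξ - w.1) +
          (-(w.2 : ℚ_[p])) * ((v.2 : ℚ_[p]) * ξ - v.1) := by
      push_cast
      ring
    have hv : ‖(-(w.2 : ℚ_[p])) * ((v.2 : ℚ_[p]) * ξ - v.1)‖ ≤ padicErr p ξ v := by
      rw [norm_mul, norm_neg]
      exact mul_le_of_le_one_left (norm_nonneg _) (Padic.norm_int_le_one _)
    have hw : ‖(v.2 : ℚ_[p]) * ((w.2 : ℚ_[p]) * ξ - w.1)‖ ≤ padicErr p ξ w := by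
      rw [norm_mul]
      exact mul_le_of_le_one_left (norm_nonneg _) (Padic.norm_int_le_one _)
    rw [hid]
    exact (Padic.nonarchimedean _ _).trans (max_comm (padicErr p ξ v) _ ▸ max_le_max hw hv)
  exact (Padic.one_le_norm_intCast_mul_abs hd).trans
    (mul_le_mul_of_nonneg_right hnorm (abs_nonneg _))

theorem eq_or_eq_neg_of_det_eq_zero {v w : ℤ × ℤ} (hv : IsCoprime v.1 v.2)
    (hw : IsCoprime w.1 w.2) (hv1 : v.1 ≠ 0) (hd : v.1 * w.2 - w.1 * v.2 = 0) :
    w = v ∨ w = -v := by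
  have hd' : v.1 * w.2 = w.1 * v.2 := sub_eq_zero.mp hd
  have h₁ : v.1 ∣ w.1 := hv.dvd_of_dvd_mul_right ⟨w.2, hd'.symm⟩
  have h₂ : w.1 ∣ v.1 := hw.dvd_of_dvd_mul_right ⟨v.2, by rw [hd', mul_comm]⟩
  rcases Int.associated_iff.mp (associated_of_dvd_dvd h₂ h₁) with h | h
  · refine Or.inl (Prod.ext h (mul_left_cancel₀ hv1 ?_))
    rw [hd', h]
  · refine Or.inr (Prod.ext h (mul_left_cancel₀ hv1 ?_))
    rw [hd', h, Prod.snd_neg]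
    ring

theorem det_ne_zero_of_logQuality_ne (ξ : ℚ_[p]) {v w : ℤ × ℤ} (hv : IsCoprime v.1 v.2)
    (hw : IsCoprime w.1 w.2) (hv1 : v.1 ≠ 0) (hq : logQuality p ξ v ≠ logQuality p ξ w) :
    v.1 * w.2 - w.1 * v.2 ≠ 0 := fun hd => by
  rcases eq_or_eq_neg_of_det_eq_zero hv hw hv1 hd with rfl | rfl
  · exact hq rfl
  · exact hq (logQuality_neg ξ v).symm

theorem mul_le_max_logHeight_add_abs_logSkew_sub (ξ : ℚ_[p]) {v w : ℤ × ℤ} (hv1 : v.1 ≠ 0)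
    (hv2 : v.2 ≠ 0) (hw1 : w.1 ≠ 0) (hw2 : w.2 ≠ 0) (hd : v.1 * w.2 - w.1 * v.2 ≠ 0) {κ M L : ℝ}
    (hqv : logQuality p ξ v ≤ κ - M * L) (hqw : logQuality p ξ w ≤ κ - M * L) :
    M * L ≤ κ + Real.log 2 + max (logHeight v) (logHeight w) + |logSkew v - logSkew w| := by
  set d : ℝ := |((v.1 * w.2 - w.1 * v.2 : ℤ) : ℝ)|
  have hd0 : 0 < d := abs_pos.mpr (by exact_mod_cast hd)
  have hlogd : Real.log d ≤
      Real.log 2 + (logHeight v + logHeight w + |logSkew v - logSkew w|) := by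
    rw [← Real.log_exp (_ + _ + _), ← Real.log_mul two_ne_zero (Real.exp_pos _).ne']
    exact Real.log_le_log hd0 (abs_det_le hv1 hv2 hw1 hw2)
  have hlog : ∀ c : ℝ, 1 ≤ c * d → 0 ≤ Real.log c + Real.log d := fun c hc => by
    have hc0 : 0 < c := pos_of_mul_pos_left (one_pos.trans_le hc) hd0.le
    rw [← Real.log_mul hc0.ne' hd0.ne']
    exact Real.log_nonneg hc
  have hmax := one_le_max_padicErr_mul_abs_det ξ hd
  rw [logQuality] at hqv hqw
  rcases max_choice (padicErr p ξ v) (padicErr p ξ w) with h | h <;> rw [h] at hmax <;>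
    linarith [hlog _ hmax, le_max_left (logHeight v) (logHeight w),
      le_max_right (logHeight v) (logHeight w)]

theorem exists_isCoprime_logHeight_le_logQuality_le {ξ : ℚ_[p]} (hξ : PadicIrrational p ξ)
    {x y : ℤ} (hx : x ≠ 0) (hy : y ≠ 0) :
    ∃ v : ℤ × ℤ, IsCoprime v.1 v.2 ∧ v.1 ≠ 0 ∧ v.2 ≠ 0 ∧
      logHeight v ≤ logHeight (x, y) ∧ logQuality p ξ v ≤ logQuality p ξ (x, y) := by
  obtain ⟨g, a, b, hg, hab, rfl, rfl⟩ := Int.exists_gcd_one' (Int.gcd_pos_of_ne_zero_left y hx)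
  have ha : a ≠ 0 := left_ne_zero_of_mul hx
  have hb : b ≠ 0 := left_ne_zero_of_mul hy
  have hg' : (g : ℤ) ≠ 0 := by exact_mod_cast hg.ne'
  have hsmul : ((a * g, b * g) : ℤ × ℤ) = (g : ℤ) • (a, b) := by
    ext <;> simp [mul_comm]
  refine ⟨(a, b), Int.isCoprime_iff_gcd_eq_one.mpr hab, ha, hb, ?_, ?_⟩
  · have hlog : 0 ≤ Real.log (g : ℝ) := Real.log_natCast_nonneg g
    simp only [logHeight, Int.cast_mul, Int.cast_natCast, abs_mul, Nat.abs_cast]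
    rw [Real.log_mul (abs_ne_zero.mpr (by exact_mod_cast ha)) (by exact_mod_cast hg.ne'),
      Real.log_mul (abs_ne_zero.mpr (by exact_mod_cast hb)) (by exact_mod_cast hg.ne')]
    linarith
  · rw [hsmul, logQuality_smul ξ hg' ha hb (padicErr_pos hξ hb).ne']
    linarith [Real.log_nonneg (Padic.one_le_norm_intCast_mul_abs (p := p) hg')]

theorem eventually_exists_logQuality_le {ξ : ℚ_[p]} (hξ : PadicIrrational p ξ) {m : ℝ}
    (hm : ∀ᶠ X : ℝ in atTop, ∃ x y : ℤ,
      0 < Real.sqrt |(x : ℝ) * (y : ℝ)| ∧ Real.sqrt |(x : ℝ) * (y : ℝ)| ≤ X ∧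
      ‖(y : ℚ_[p]) * ξ - (x : ℚ_[p])‖ ≤ X ^ (-m)) :
    ∀ᶠ L : ℝ in atTop, ∃ v : ℤ × ℤ, IsCoprime v.1 v.2 ∧ v.1 ≠ 0 ∧ v.2 ≠ 0 ∧
      logHeight v ≤ L ∧ logQuality p ξ v ≤ -(m - 1) * L := by
  filter_upwards [Real.tendsto_exp_atTop.eventually hm] with L ⟨x, y, hpos, hle, herr⟩
  have hxy : (x : ℝ) * y ≠ 0 := abs_pos.mp (Real.sqrt_pos.mp hpos)
  have hx : x ≠ 0 := by exact_mod_cast left_ne_zero_of_mul hxy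
  have hy : y ≠ 0 := by exact_mod_cast right_ne_zero_of_mul hxy
  have hheight : logHeight (x, y) ≤ L := by
    have : logHeight (x, y) = Real.log (Real.sqrt |(x : ℝ) * y|) := by
      rw [Real.log_sqrt (abs_nonneg _), abs_mul,
        Real.log_mul (abs_ne_zero.mpr (by exact_mod_cast hx))
          (abs_ne_zero.mpr (by exact_mod_cast hy)), logHeight]
    rw [this, ← Real.log_exp L]
    exact Real.log_le_log hpos hle
  have herr' : Real.log (padicErr p ξ (x, y)) ≤ -m * L := by
    rw [← Real.log_exp (-m * L), mul_comm, Real.exp_mul]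
    exact Real.log_le_log (padicErr_pos hξ hy) herr
  obtain ⟨v, hv, hv1, hv2, hhv, hqv⟩ := exists_isCoprime_logHeight_le_logQuality_le hξ hx hy
  refine ⟨v, hv, hv1, hv2, hhv.trans hheight, hqv.trans ?_⟩
  rw [logQuality]
  linarith

end Vectors

theorem false_of_three_scales {M C X Y h₁ h₂ h₃ s₁ s₂ s₃ : ℝ} (hM : 2 ≤ M) (hXY : X ≤ Y)
    (hs₁ : |s₁| ≤ h₁) (hh₁ : h₁ ≤ X) (hs₂ : |s₂| ≤ h₂) (hh₂ : h₂ ≤ X)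
    (hs₃ : |s₃| ≤ h₃) (hh₃ : h₃ ≤ Y)
    (h₁₂ : M * X ≤ C + max h₁ h₂ + |s₁ - s₂|) (h₂₃ : M * Y ≤ C + max h₂ h₃ + |s₂ - s₃|)
    (h₁₃ : M * X ≤ C + max h₁ h₃ + |s₁ - s₃|)
    (t₁ : C < (M - 2) * X) (t₂ : (M - 1) * C < (M ^ 2 - 3 * M + 1) * X)
    (t₃ : (M - 1) * C < (M ^ 2 - 2 * M - 1) * X) (t₄ : 2 * C < (M - 1) * X) : False := by
  have a₁ : |s₁| ≤ X := hs₁.trans hh₁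
  have a₂ : |s₂| ≤ X := hs₂.trans hh₂
  have a₃ : |s₃| ≤ Y := hs₃.trans hh₃
  have hY : 0 ≤ Y := (abs_nonneg s₁).trans (a₁.trans hXY)
  have m₁₂ : max h₁ h₂ ≤ X := max_le hh₁ hh₂
  have m₂₃ : max h₂ h₃ ≤ Y := max_le (hh₂.trans hXY) hh₃
  have m₁₃ : max h₁ h₃ ≤ Y := max_le (hh₁.trans hXY) hh₃
  have hMXY : (M - 2) * X ≤ (M - 2) * Y := mul_le_mul_of_nonneg_left hXY (by linarith)
  have o₁₂ : s₁ * s₂ < 0 := by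
    by_contra! h
    have := abs_sub_le_of_nonneg_of_le (abs_nonneg s₁) a₁ (abs_nonneg s₂) a₂
    rw [← abs_sub_eq_abs_abs_sub_abs_of_mul_nonneg h] at this
    linarith
  have o₂₃ : s₂ * s₃ < 0 := by
    by_contra! h
    have := abs_sub_le_of_nonneg_of_le (abs_nonneg s₂) (a₂.trans hXY) (abs_nonneg s₃) a₃
    rw [← abs_sub_eq_abs_abs_sub_abs_of_mul_nonneg h] at this
    linarith
  have e₁₃ : |s₁ - s₃| = |(|s₁| - |s₃|)| := abs_sub_eq_abs_abs_sub_abs_of_mul_nonneg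
    (by nlinarith [mul_pos_of_neg_of_neg o₁₂ o₂₃, sq_nonneg s₂])
  have l₁ : (M - 2) * X - C ≤ |s₁| := by linarith [abs_sub s₁ s₂]
  have l₃ : (M - 2) * Y - C ≤ |s₃| := by linarith [abs_sub s₂ s₃]
  have u₃ : (M - 2) * Y ≤ X + C := by linarith [abs_sub s₂ s₃]
  rcases le_total |s₁| |s₃| with h | h
  · rw [e₁₃, abs_of_nonpos (sub_nonpos.mpr h)] at h₁₃
    have : (M - 1) * X ≤ Y + C := by linarith
    nlinarith [mul_le_mul_of_nonneg_left this (by linarith : (0 : ℝ) ≤ M - 2)]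
  · rw [e₁₃, abs_of_nonneg (sub_nonneg.mpr h)] at h₁₃
    have : (M - 1) * X ≤ (3 - M) * Y + 2 * C := by linarith
    rcases le_total 3 M with h3 | h3
    · nlinarith [mul_nonneg (by linarith : (0 : ℝ) ≤ M - 3) hY]
    · nlinarith [mul_le_mul_of_nonneg_left u₃ (by linarith : (0 : ℝ) ≤ 3 - M),
        mul_le_mul_of_nonneg_left this (by linarith : (0 : ℝ) ≤ M - 2)]

theorem eventually_false_of_three_scales {M : ℝ} (hM : (3 + Real.sqrt 5) / 2 < M) (C : ℝ) :
    ∀ᶠ X : ℝ in atTop, ∀ Y h₁ h₂ h₃ s₁ s₂ s₃ : ℝ, X ≤ Y →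
      |s₁| ≤ h₁ → h₁ ≤ X → |s₂| ≤ h₂ → h₂ ≤ X → |s₃| ≤ h₃ → h₃ ≤ Y →
      M * X ≤ C + max h₁ h₂ + |s₁ - s₂| → M * Y ≤ C + max h₂ h₃ + |s₂ - s₃| →
      M * X ≤ C + max h₁ h₃ + |s₁ - s₃| → False := by
  have h5 : Real.sqrt 5 ^ 2 = 5 := Real.sq_sqrt (by norm_num)
  have h5' : 2 < Real.sqrt 5 := by nlinarith [Real.sqrt_nonneg 5]
  have large : ∀ {a : ℝ}, 0 < a → ∀ b : ℝ, ∀ᶠ X : ℝ in atTop, b < a * X :=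
    fun ha b => (tendsto_id.const_mul_atTop ha).eventually_gt_atTop b
  filter_upwards [large (by linarith : 0 < M - 2) C,
    large (by nlinarith : 0 < M ^ 2 - 3 * M + 1) ((M - 1) * C),
    large (by nlinarith : 0 < M ^ 2 - 2 * M - 1) ((M - 1) * C),
    large (by linarith : 0 < M - 1) (2 * C)] with X t₁ t₂ t₃ t₄
  intro Y h₁ h₂ h₃ s₁ s₂ s₃ hXY hs₁ hh₁ hs₂ hh₂ hs₃ hh₃ h₁₂ h₂₃ h₁₃
  exact false_of_three_scales (by linarith) hXY hs₁ hh₁ hs₂ hh₂ hs₃ hh₃ h₁₂ h₂₃ h₁₃ t₁ t₂ t₃ t₄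

theorem false_of_eventually_exists_logQuality_le {p : ℕ} [Fact p.Prime] {ξ : ℚ_[p]} {M : ℝ}
    (hM : (3 + Real.sqrt 5) / 2 < M)
    (hgood : ∀ᶠ L : ℝ in atTop, ∃ v : ℤ × ℤ, IsCoprime v.1 v.2 ∧ v.1 ≠ 0 ∧ v.2 ≠ 0 ∧
      logHeight v ≤ L ∧ logQuality p ξ v ≤ -M * L) : False := by
  have hM0 : 0 < M := by nlinarith [Real.sqrt_nonneg 5]
  obtain ⟨L₀, hL₀⟩ := eventually_atTop.mp
    (hgood.and (eventually_false_of_three_scales hM (M + Real.log 2)))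
  -- `L'` is the scale where the vector stops being good, plus `1`, so the next one has smaller `q`
  have rescale : ∀ {q L : ℝ}, q ≤ -M * L → ∃ L', L + 1 ≤ L' ∧ q = M - M * L' := fun {q L} h =>
    ⟨(M - q) / M, by rw [le_div_iff₀ hM0]; linarith, by field_simp; ring⟩
  obtain ⟨u, hu, hu1, hu2, hhu, hqu⟩ := (hL₀ L₀ le_rfl).1
  obtain ⟨L₁, hL₁, hqu⟩ := rescale hqu
  obtain ⟨v, hv, hv1, hv2, hhv, hqv⟩ := (hL₀ L₁ (by linarith)).1
  obtain ⟨L₂, hL₂, hqv⟩ := rescale hqv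
  obtain ⟨w, hw, hw1, hw2, hhw, hqw⟩ := (hL₀ L₂ (by linarith)).1
  have hML : M * L₁ ≤ M * L₂ := mul_le_mul_of_nonneg_left (by linarith) hM0.le
  have huv := det_ne_zero_of_logQuality_ne ξ hu hv hu1 (by linarith)
  have hvw := det_ne_zero_of_logQuality_ne ξ hv hw hv1 (by linarith)
  have huw := det_ne_zero_of_logQuality_ne ξ hu hw hu1 (by linarith)
  exact (hL₀ L₁ (by linarith)).2 L₂ _ _ _ _ _ _ (by linarith)
    (abs_logSkew_le_logHeight u) (by linarith) (abs_logSkew_le_logHeight v) hhv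
    (abs_logSkew_le_logHeight w) hhw
    (mul_le_max_logHeight_add_abs_logSkew_sub ξ hu1 hu2 hv1 hv2 huv hqu.le (by linarith))
    (mul_le_max_logHeight_add_abs_logSkew_sub ξ hv1 hv2 hw1 hw2 hvw hqv.le (by linarith))
    (mul_le_max_logHeight_add_abs_logSkew_sub ξ hu1 hu2 hw1 hw2 huw hqu.le (by linarith))

/-- Every irrational `p`-adic number `ξ` satisfies `μ̂×(ξ) ≤ (5 + √5)/2`. -/
theorem statement14 (p : ℕ) [Fact p.Prime] (ξ : ℚ_[p]) (hξ : PadicIrrational p ξ) :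
    muHatTimesExp p ξ ≤ ENNReal.ofReal ((5 + Real.sqrt 5) / 2) := by
  refine sSup_le ?_
  rintro _ ⟨m, hm, rfl⟩
  refine ENNReal.ofReal_le_ofReal (le_of_not_gt fun hlt => ?_)
  exact false_of_eventually_exists_logQuality_le (M := m - 1) (by linarith)
    (eventually_exists_logQuality_le hξ hm)
end

section
/- Every p-adic Liouville number ξ (that is, every irrational ξ ∈ ℚ_p with μ(ξ) = ∞) satisfies μ̂×(ξ) ≤ 3. -/
open Filter MeasureTheory
open scoped ENNReal

/-!
Suppose some `m > 3` were a uniform multiplicative exponent. Since `μ(ξ) = ∞` there is an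
approximation `(x₀, y₀)` of height `H > 8` with `δ₀ = |y₀ξ - x₀|_p ≤ H^(-2(m-1)/(m-3))`;
write `δ₀ = s^(1-m)`, so that `H² ≤ s^(m-3)`, and apply uniformity at `X = 2s` to get `(x, y)`.
If `(x, y)` is proportional to `(x₀, y₀)`, then `δ₀ ≤ min(|x|,|y|) |yξ - x|_p ≤ X^(1-m) < δ₀`.
Otherwise `D = x y₀ - x₀ y` is a nonzero integer with `|D|_p ≤ δ₀` and `|D| ≤ 2X²H`, and
`1 ≤ |D|_p |D|` gives `1 ≤ 8 s^(3-m) H ≤ 8 / H`.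
-/

theorem finite_setOf_max_abs_intCast_le (B : ℝ) :
    {q : ℤ × ℤ | max |(q.1 : ℝ)| |(q.2 : ℝ)| ≤ B}.Finite := by
  convert (isCompact_closedBall (0 : ℤ × ℤ) B).finite_of_discrete using 1
  ext q
  simp [Prod.norm_def, Int.norm_eq_abs]

theorem exists_rpow_eq_and_sq_le_rpow {m H δ : ℝ} (hm : 3 < m) (hH : 1 ≤ H) (hδ : 0 < δ)
    (hδH : δ ≤ H ^ (-(2 * (m - 1) / (m - 3)))) :
    ∃ s : ℝ, 1 ≤ s ∧ δ = s ^ (1 - m) ∧ H ^ 2 ≤ s ^ (m - 3) := by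
  have hm1 : 1 - m ≠ 0 := by linarith
  have hm3 : m - 3 ≠ 0 := by linarith
  have hexp : (1 - m)⁻¹ ≤ 0 := inv_nonpos.2 (by linarith)
  refine ⟨δ ^ (1 - m)⁻¹, ?_, ?_, ?_⟩
  · refine Real.one_le_rpow_of_pos_of_le_one_of_nonpos hδ (hδH.trans ?_) hexp
    exact Real.rpow_le_one_of_one_le_of_nonpos hH
      (neg_nonpos.2 (div_nonneg (by linarith) (by linarith)))
  · rw [← Real.rpow_mul hδ.le, inv_mul_cancel₀ hm1, Real.rpow_one]
  · calc H ^ 2 = (H ^ (-(2 * (m - 1) / (m - 3)))) ^ ((1 - m)⁻¹ * (m - 3)) := by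
          rw [← Real.rpow_mul (by linarith), ← Real.rpow_natCast]
          congr 1
          field_simp
          push_cast
          ring
      _ ≤ δ ^ ((1 - m)⁻¹ * (m - 3)) :=
          Real.rpow_le_rpow_of_nonpos hδ hδH (mul_nonpos_of_nonpos_of_nonneg hexp (by linarith))
      _ = (δ ^ (1 - m)⁻¹) ^ (m - 3) := Real.rpow_mul hδ.le _ _

theorem two_mul_rpow_bounds {m s H : ℝ} (hm : 3 < m) (hs : 1 ≤ s) (hH : 8 < H)
    (hHs : H ^ 2 ≤ s ^ (m - 3)) :
    2 * s * (2 * s) ^ (-m) < s ^ (1 - m) ∧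
      max (s ^ (1 - m)) ((2 * s) ^ (-m)) * (2 * (2 * s) ^ 2 * H) < 1 := by
  have hs0 : 0 < s := by linarith
  constructor
  · calc 2 * s * (2 * s) ^ (-m) = 2 ^ (1 - m) * s ^ (1 - m) := by
          rw [← Real.rpow_one_add' (by positivity) (by linarith), ← sub_eq_add_neg,
            Real.mul_rpow (by norm_num) hs0.le]
      _ < 1 * s ^ (1 - m) := by
          gcongr
          exact Real.rpow_lt_one_of_one_lt_of_neg one_lt_two (by linarith)
      _ = s ^ (1 - m) := one_mul _
  · have hmax : (2 * s) ^ (-m) ≤ s ^ (1 - m) :=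
      calc (2 * s) ^ (-m) ≤ s ^ (-m) := Real.rpow_le_rpow_of_nonpos hs0 (by linarith) (by linarith)
        _ ≤ s ^ (1 - m) := Real.rpow_le_rpow_of_exponent_le hs (by linarith)
    have hsm : s ^ (1 - m) * s ^ 2 = (s ^ (m - 3))⁻¹ := by
      rw [← Real.rpow_natCast, ← Real.rpow_add hs0, ← Real.rpow_neg hs0.le]
      congr 1
      push_cast
      ring
    have hpos : 0 < s ^ (m - 3) := by positivity
    rw [max_eq_left hmax, show s ^ (1 - m) * (2 * (2 * s) ^ 2 * H) = 8 * H * (s ^ (1 - m) * s ^ 2)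
      by ring, hsm, ← div_eq_mul_inv, div_lt_one hpos]
    nlinarith

theorem abs_intCast_mul_sub_mul_le {x₀ y₀ x y : ℤ} (hx : x ≠ 0) (hy : y ≠ 0) :
    |((x * y₀ - x₀ * y : ℤ) : ℝ)| ≤ 2 * |(x : ℝ) * y| * max |(x₀ : ℝ)| |(y₀ : ℝ)| := by
  have hx1 : (1 : ℝ) ≤ |(x : ℝ)| := by exact_mod_cast Int.one_le_abs hx
  have hy1 : (1 : ℝ) ≤ |(y : ℝ)| := by exact_mod_cast Int.one_le_abs hy
  set H := max |(x₀ : ℝ)| |(y₀ : ℝ)|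
  have hH : 0 ≤ H := (abs_nonneg _).trans (le_max_left _ _)
  have hx₀ : |(x₀ : ℝ)| ≤ H := le_max_left _ _
  have hy₀ : |(y₀ : ℝ)| ≤ H := le_max_right _ _
  push_cast
  calc |(x : ℝ) * y₀ - x₀ * y| ≤ |(x : ℝ)| * |(y₀ : ℝ)| + |(x₀ : ℝ)| * |(y : ℝ)| := by
        rw [← abs_mul, ← abs_mul]; exact abs_sub _ _
    _ ≤ |(x : ℝ)| * (|(y : ℝ)| * H) + (|(x : ℝ)| * H) * |(y : ℝ)| := by
        gcongr
        · exact hy₀.trans (le_mul_of_one_le_left hH hy1)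
        · exact hx₀.trans (le_mul_of_one_le_left hH hx1)
    _ = 2 * |(x : ℝ) * y| * H := by rw [abs_mul]; ring

namespace Padic

variable {p : ℕ} [Fact p.Prime]

theorem one_le_norm_intCast_mul_abs_s15 {n : ℤ} (hn : n ≠ 0) : 1 ≤ ‖(n : ℚ_[p])‖ * |(n : ℝ)| := by
  have hp : (0 : ℝ) < p := by exact_mod_cast (Fact.out : p.Prime).pos
  have hv : (p : ℝ) ^ padicValInt p n ≤ |(n : ℝ)| := by
    rw [← Int.cast_abs]
    exact_mod_cast Int.le_of_dvd (abs_pos.mpr hn) ((padicValInt_dvd n).trans (self_dvd_abs n))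
  rw [norm_eq_zpow_neg_valuation (by exact_mod_cast hn), valuation_intCast, zpow_neg,
    zpow_natCast, inv_mul_eq_div, one_le_div (by positivity)]
  exact hv

theorem norm_le_abs_mul_norm_of_intCast_mul_eq {a b : ℚ_[p]} {z u : ℤ} (hz : z ≠ 0)
    (h : (z : ℚ_[p]) * a = u * b) : ‖a‖ ≤ |(z : ℝ)| * ‖b‖ :=
  calc ‖a‖ ≤ ‖a‖ * (‖(z : ℚ_[p])‖ * |(z : ℝ)|) :=
        le_mul_of_one_le_right (norm_nonneg _) (one_le_norm_intCast_mul_abs_s15 hz)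
    _ = |(z : ℝ)| * (‖(u : ℚ_[p])‖ * ‖b‖) := by rw [← norm_mul, ← h, norm_mul]; ring
    _ ≤ |(z : ℝ)| * ‖b‖ := by
        gcongr
        exact mul_le_of_le_one_left (norm_nonneg _) (norm_int_le_one u)

variable {ξ : ℚ_[p]} {x₀ y₀ x y : ℤ}

theorem norm_sub_le_sqrt_mul_norm_sub_of_mul_eq (hx : x ≠ 0) (hy : y ≠ 0)
    (hxy : x * y₀ = x₀ * y) :
    ‖(y₀ : ℚ_[p]) * ξ - x₀‖ ≤ √|(x : ℝ) * y| * ‖(y : ℚ_[p]) * ξ - x‖ := by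
  have hxy' : (x : ℚ_[p]) * y₀ = x₀ * y := by exact_mod_cast hxy
  rcases le_total |(x : ℝ)| |(y : ℝ)| with hle | hle
  · have hx_le : |(x : ℝ)| ≤ √|(x : ℝ) * y| :=
      Real.abs_le_sqrt (by rw [abs_mul, ← sq_abs]; nlinarith [abs_nonneg (x : ℝ)])
    refine (norm_le_abs_mul_norm_of_intCast_mul_eq (u := x₀) hx ?_).trans (by gcongr)
    linear_combination ξ * hxy'
  · have hy_le : |(y : ℝ)| ≤ √|(x : ℝ) * y| :=
      Real.abs_le_sqrt (by rw [abs_mul, ← sq_abs]; nlinarith [abs_nonneg (y : ℝ)])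
    refine (norm_le_abs_mul_norm_of_intCast_mul_eq (u := y₀) hy ?_).trans (by gcongr)
    linear_combination hxy'

theorem one_le_max_norm_sub_mul_abs_of_mul_ne (hxy : x * y₀ ≠ x₀ * y) :
    1 ≤ max ‖(y₀ : ℚ_[p]) * ξ - x₀‖ ‖(y : ℚ_[p]) * ξ - x‖ *
      |((x * y₀ - x₀ * y : ℤ) : ℝ)| := by
  have hD : (((x * y₀ - x₀ * y : ℤ) : ℚ_[p])) =
      y * ((y₀ : ℚ_[p]) * ξ - x₀) + ((-y₀ : ℤ) : ℚ_[p]) * ((y : ℚ_[p]) * ξ - x) := by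
    push_cast; ring
  have hDnorm : ‖(((x * y₀ - x₀ * y : ℤ) : ℚ_[p]))‖ ≤
      max ‖(y₀ : ℚ_[p]) * ξ - x₀‖ ‖(y : ℚ_[p]) * ξ - x‖ := by
    rw [hD]
    refine (nonarchimedean _ _).trans (max_le_max ?_ ?_) <;> rw [norm_mul] <;>
      exact mul_le_of_le_one_left (norm_nonneg _) (norm_int_le_one _)
  calc 1 ≤ ‖(((x * y₀ - x₀ * y : ℤ) : ℚ_[p]))‖ * |((x * y₀ - x₀ * y : ℤ) : ℝ)| :=
        one_le_norm_intCast_mul_abs_s15 (sub_ne_zero.mpr hxy)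
    _ ≤ _ := by gcongr

theorem exists_norm_sub_le_rpow_neg_of_muExp_eq_top (hξ : muExp p ξ = ⊤) (w B : ℝ) :
    ∃ x₀ y₀ : ℤ, B < max |(x₀ : ℝ)| |(y₀ : ℝ)| ∧ 0 < ‖(y₀ : ℚ_[p]) * ξ - x₀‖ ∧
      ‖(y₀ : ℚ_[p]) * ξ - x₀‖ ≤ max |(x₀ : ℝ)| |(y₀ : ℝ)| ^ (-w) := by
  have hw : ENNReal.ofReal w < muExp p ξ := hξ ▸ ENNReal.ofReal_lt_top
  obtain ⟨_, ⟨w', hinf, rfl⟩, hww'⟩ := lt_sSup_iff.1 hw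
  obtain ⟨⟨x₀, y₀⟩, ⟨hx₀, -, hpos, hle⟩, hB⟩ :=
    (hinf.sdiff (finite_setOf_max_abs_intCast_le B)).nonempty
  have hH : (1 : ℝ) ≤ max |(x₀ : ℝ)| |(y₀ : ℝ)| :=
    le_max_of_le_left (by exact_mod_cast Int.one_le_abs hx₀)
  refine ⟨x₀, y₀, not_le.1 hB, hpos, hle.trans (Real.rpow_le_rpow_of_exponent_le hH ?_)⟩
  exact neg_le_neg (ENNReal.ofReal_lt_ofReal_iff'.1 hww').1.le

theorem not_eventually_exists_of_muExp_eq_top (hξ : muExp p ξ = ⊤) {m : ℝ} (hm : 3 < m) :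
    ¬ ∀ᶠ X : ℝ in atTop, ∃ x y : ℤ, 0 < √|(x : ℝ) * y| ∧ √|(x : ℝ) * y| ≤ X ∧
      ‖(y : ℚ_[p]) * ξ - x‖ ≤ X ^ (-m) := by
  intro hev
  obtain ⟨X₀, hX₀⟩ := eventually_atTop.1 hev
  obtain ⟨x₀, y₀, hH, hδ₀, hδ₀H⟩ := exists_norm_sub_le_rpow_neg_of_muExp_eq_top hξ
    (2 * (m - 1) / (m - 3)) (max 8 (|X₀| ^ (m - 3)))
  set H := max |(x₀ : ℝ)| |(y₀ : ℝ)|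
  set δ₀ := ‖(y₀ : ℚ_[p]) * ξ - x₀‖
  have hH8 : 8 < H := (le_max_left _ _).trans_lt hH
  obtain ⟨s, hs1, hδ₀s, hHs⟩ := exists_rpow_eq_and_sq_le_rpow hm (by linarith) hδ₀ hδ₀H
  have hX₀s : X₀ ≤ 2 * s := by
    have : |X₀| ^ (m - 3) < s ^ (m - 3) := by nlinarith [le_max_right 8 (|X₀| ^ (m - 3))]
    have := (Real.rpow_lt_rpow_iff (abs_nonneg _) (by linarith) (by linarith)).1 this
    linarith [le_abs_self X₀]
  obtain ⟨x, y, hxy0, hxyX, hxyδ⟩ := hX₀ (2 * s) hX₀s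
  have hxy : (x : ℝ) * y ≠ 0 := abs_pos.1 (Real.sqrt_pos.1 hxy0)
  have hx : x ≠ 0 := by exact_mod_cast left_ne_zero_of_mul hxy
  have hy : y ≠ 0 := by exact_mod_cast right_ne_zero_of_mul hxy
  obtain ⟨hprop, hcross⟩ := two_mul_rpow_bounds hm hs1 hH8 hHs
  by_cases hc : x * y₀ = x₀ * y
  · have : δ₀ ≤ 2 * s * (2 * s) ^ (-m) :=
      (norm_sub_le_sqrt_mul_norm_sub_of_mul_eq hx hy hc).trans (by gcongr)
    linarith
  · have hxyX2 : |(x : ℝ) * y| ≤ (2 * s) ^ 2 := (Real.sqrt_le_left (by positivity)).1 hxyX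
    have : 1 ≤ max δ₀ ((2 * s) ^ (-m)) * (2 * (2 * s) ^ 2 * H) :=
      calc 1 ≤ max δ₀ ‖(y : ℚ_[p]) * ξ - x‖ * |((x * y₀ - x₀ * y : ℤ) : ℝ)| :=
            one_le_max_norm_sub_mul_abs_of_mul_ne hc
        _ ≤ max δ₀ ((2 * s) ^ (-m)) * (2 * |(x : ℝ) * y| * H) := by
            gcongr
            exact abs_intCast_mul_sub_mul_le hx hy
        _ ≤ max δ₀ ((2 * s) ^ (-m)) * (2 * (2 * s) ^ 2 * H) := by gcongr
    rw [hδ₀s] at this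
    linarith

end Padic

theorem statement15_general (p : ℕ) [Fact p.Prime] (ξ : ℚ_[p])
    (hLiouville : muExp p ξ = ⊤) :
    muHatTimesExp p ξ ≤ 3 := by
  refine sSup_le ?_
  rintro _ ⟨m, hm, rfl⟩
  rcases le_or_gt m 3 with h | h
  · simpa using ENNReal.ofReal_le_ofReal h
  · exact absurd hm (Padic.not_eventually_exists_of_muExp_eq_top hLiouville h)

/-- Every `p`-adic Liouville number (irrational `ξ` with `μ(ξ) = ∞`) satisfies
`μ̂×(ξ) ≤ 3`. -/
theorem statement15 (p : ℕ) [Fact p.Prime] (ξ : ℚ_[p]) (hξ : PadicIrrational p ξ)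
    (hLiouville : muExp p ξ = ⊤) :
    muHatTimesExp p ξ ≤ 3 :=
  statement15_general p ξ hLiouville
end
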